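/- arXiv:2106.16130 — 4 statements merged into one kernel-verified Lean document; each statement's English description precedes it below -/
import Mathlib

section
/- Let G be a connected graph on n vertices with tree-depth at most td. Then δ(A(G)) ≤ 2·td·n. -/
open SimpleGraph

/-- A search tree (elimination tree) on a graph `G`, encoded by its ancestor
relation: `anc u v` means that `u` is an ancestor of `v` (possibly `u = v`).
Equivalently (for connected `G`): the root is a vertex `r`, joined to the roots
of search trees on each connected component of `G - r`. -/
structure SearchTree {V : Type} (G : SimpleGraph V) : Type where
  anc : V → V → Prop
  refl : ∀ v, anc v v
  antisymm : ∀ u v, anc u v → anc v u → u = v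
  trans : ∀ u v w, anc u v → anc v w → anc u w
  chain : ∀ u v w, anc u w → anc v w → anc u v ∨ anc v u
  root : ∃ r, ∀ v, anc r v
  edge_comparable : ∀ u v, G.Adj u v → anc u v ∨ anc v u
  desc_connected : ∀ v, (G.induce {u | anc v u}).Connected

namespace SearchTree

/-- The set of descendants of `v` (including `v`): the vertex set of the
subtree rooted at `v`. -/
def descSet {V : Type} {G : SimpleGraph V} (T : SearchTree G) (v : V) : Set V :=
  {u | T.anc v u}

/-- The height of a search tree: the maximal number of vertices on a
root-to-leaf path (a single-vertex tree has height 1). -/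
noncomputable def height {V : Type} [Fintype V] {G : SimpleGraph V} (T : SearchTree G) : ℕ :=
  Finset.univ.sup fun v => Set.ncard {u | T.anc u v}

end SearchTree

/-- `T'` is obtained from `T` by a rotation at a vertex `b` with parent `a`:
the subtree of `T` rooted at `a` (with vertex set `A`) becomes rooted at `b`,
`a` becomes the root of the component of `G[A] - b` containing `a`, and all
other subtrees are unchanged. The rotation is said to involve `a` and `b`. -/
def IsRotation {V : Type} {G : SimpleGraph V} (T T' : SearchTree G) (a b : V) : Prop :=
  a ≠ b ∧ T.anc a b ∧ T'.descSet b = T.descSet a ∧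
    ∀ v, v ≠ a → v ≠ b → T'.descSet v = T.descSet v

/-- The rotation graph of `G`: vertices are the search trees on `G`, two
trees being adjacent when they differ by a single rotation. It is the skeleton
of the graph associahedron `A(G)`; its diameter is `δ(A(G))`. -/
def rotationGraph {V : Type} (G : SimpleGraph V) : SimpleGraph (SearchTree G) where
  Adj T T' := ∃ a b, IsRotation T T' a b
  symm := by
    constructor
    rintro T T' ⟨a, b, hne, hanc, hb, hoth⟩
    have hanc' : T'.anc b a := by
      have ha : a ∈ T'.descSet b := by rw [hb]; exact T.refl a
      exact ha
    exact ⟨b, a, hne.symm, hanc', hb.symm, fun v h1 h2 => (hoth v h2 h1).symm⟩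
  loopless := by
    constructor
    rintro T ⟨a, b, hne, hanc, hb, hoth⟩
    have h : T.anc b a := by
      have ha : a ∈ T.descSet b := by rw [hb]; exact T.refl a
      exact ha
    exact hne (T.antisymm a b hanc h)

/-- The tree-depth of `G`: the smallest height of a search tree on `G`. -/
noncomputable def treeDepth {V : Type} [Fintype V] (G : SimpleGraph V) : ℕ :=
  sInf {h | ∃ T : SearchTree G, T.height = h}

/-- Adding a universal vertex to a graph. -/
def addUniversal {V : Type} (G : SimpleGraph V) : SimpleGraph (Option V) where
  Adj x y := match x, y with
    | none, none => False
    | none, some _ => True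
    | some _, none => True
    | some a, some b => G.Adj a b
  symm := by
    constructor
    rintro (_ | a) (_ | b) h
    · exact h.elim
    · trivial
    · trivial
    · exact G.adj_symm h
  loopless := by
    constructor
    rintro (_ | a) h
    · exact h
    · exact G.irrefl h

/-- Disjoint union of two graphs. -/
def disjUnion {V W : Type} (G : SimpleGraph V) (H : SimpleGraph W) : SimpleGraph (V ⊕ W) where
  Adj x y := match x, y with
    | .inl a, .inl b => G.Adj a b
    | .inr a, .inr b => H.Adj a b
    | _, _ => False
  symm := by
    constructor
    rintro (a | a) (b | b) h
    · exact G.adj_symm h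
    · exact h.elim
    · exact h.elim
    · exact H.adj_symm h
  loopless := by
    constructor
    rintro (a | a) h
    · exact G.irrefl h
    · exact H.irrefl h

/-- Graphs built recursively from single vertices by adding universal vertices
and taking disjoint unions. -/
inductive TPBuild : {V : Type} → SimpleGraph V → Prop
  | single : TPBuild (⊥ : SimpleGraph PUnit)
  | addUniv {V : Type} {G : SimpleGraph V} : TPBuild G → TPBuild (addUniversal G)
  | union {V W : Type} {G : SimpleGraph V} {H : SimpleGraph W} :
      TPBuild G → TPBuild H → TPBuild (disjUnion G H)

/-- A graph is trivially perfect if it can be built recursively from single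
vertices by repeatedly adding universal vertices and taking disjoint unions. -/
def TriviallyPerfect {V : Type} (G : SimpleGraph V) : Prop :=
  ∃ (W : Type) (H : SimpleGraph W), TPBuild H ∧ Nonempty (G ≃g H)

/-- A graph is chordal if it has no induced cycle of length at least 4. -/
def Chordal {V : Type} (G : SimpleGraph V) : Prop :=
  ∀ n, 4 ≤ n → IsEmpty (cycleGraph n ↪g G)

/-- The treewidth of `G`: one less than the smallest clique number of a chordal
supergraph of `G` on the same vertex set. -/
noncomputable def treewidth {V : Type} (G : SimpleGraph V) : ℕ :=
  sInf {k | ∃ H : SimpleGraph V, G ≤ H ∧ Chordal H ∧ H.cliqueNum = k + 1}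

/-- An interval graph: the intersection graph of closed intervals on the real line. -/
def IsIntervalGraph {V : Type} (G : SimpleGraph V) : Prop :=
  ∃ lo hi : V → ℝ, (∀ v, lo v ≤ hi v) ∧
    ∀ u v, G.Adj u v ↔ u ≠ v ∧ lo u ≤ hi v ∧ lo v ≤ hi u

/-- The pathwidth of `G`: one less than the smallest clique number of an
interval supergraph of `G` on the same vertex set. -/
noncomputable def pathwidth {V : Type} (G : SimpleGraph V) : ℕ :=
  sInf {k | ∃ H : SimpleGraph V, G ≤ H ∧ IsIntervalGraph H ∧ H.cliqueNum = k + 1}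

/-- A vertex is simplicial if its neighborhood induces a clique. -/
def Simplicial {V : Type} (G : SimpleGraph V) (v : V) : Prop :=
  G.IsClique (G.neighborSet v)

/-- A set of vertices is (monophonically) convex if it can be obtained from the
full vertex set by iteratively deleting a simplicial vertex of the current
induced subgraph. -/
inductive MConvex {V : Type} (G : SimpleGraph V) : Set V → Prop
  | univ : MConvex G Set.univ
  | delete {S : Set V} {v : V} (hS : MConvex G S) (hv : v ∈ S)
      (hsimp : Simplicial (G.induce S) ⟨v, hv⟩) : MConvex G (S \ {v})

/-- `P` is the projection of the search tree `T` on the convex set `S`: the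
search tree on `G[S]` obtained from `T` by iteratively deleting the vertices
outside `S`; its ancestor relation is the restriction of that of `T`. -/
def IsProjection {V : Type} {G : SimpleGraph V} (S : Set V) (T : SearchTree G)
    (P : SearchTree (G.induce S)) : Prop :=
  ∀ u v : S, P.anc u v ↔ T.anc (↑u) (↑v)

/-- The complete split graph `SPK p q`: a clique `P` of `p` vertices, an
independent set `Q` of `q` vertices, and all edges between `P` and `Q`. -/
def SPK (p q : ℕ) : SimpleGraph (Fin p ⊕ Fin q) where
  Adj x y := x ≠ y ∧ (x.isLeft ∨ y.isLeft)
  symm := by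
    constructor
    rintro x y ⟨h1, h2⟩
    exact ⟨h1.symm, h2.symm⟩
  loopless := by
    constructor
    rintro x ⟨h, _⟩
    exact h rfl

/-!
Fix a search tree `T₀` of minimum height. For a search tree `T`, count the pairs `(u, w)` with
`u` a `T`-ancestor and a `T₀`-descendant of `w`: there are at most `n · height T₀` of them. If
`T ≠ T₀`, let `v` be highest in `T₀` among the vertices whose subtrees in `T` and `T₀` differ.
Then the `T`-parent `a` of `v` is a `T₀`-descendant of `v`, and rotating `v` above `a` destroys
the pair `(a, v)` without creating a new one. Hence every search tree lies within `n · td`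
rotations of `T₀`.
-/

variable {V : Type} {G : SimpleGraph V}

/-- Reachability in `G[S]`, stated for vertices of `G` so as to avoid subtypes. -/
def ReachableIn (G : SimpleGraph V) (S : Set V) (x y : V) : Prop :=
  ∃ p : G.Walk x y, ∀ z ∈ p.support, z ∈ S

namespace ReachableIn

variable {S U : Set V} {x y z : V}

lemma mem_right (h : ReachableIn G S x y) : y ∈ S :=
  h.elim fun p hp => hp y p.end_mem_support

lemma refl (hx : x ∈ S) : ReachableIn G S x x :=
  ⟨.nil, by simpa using hx⟩

lemma trans (h : ReachableIn G S x y) (h' : ReachableIn G S y z) : ReachableIn G S x z := by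
  obtain ⟨p, hp⟩ := h
  obtain ⟨q, hq⟩ := h'
  refine ⟨p.append q, fun w hw => ?_⟩
  rcases Walk.mem_support_append_iff _ _ |>.1 hw with hw | hw
  exacts [hp w hw, hq w hw]

lemma mono (hSU : S ⊆ U) (h : ReachableIn G S x y) : ReachableIn G U x y :=
  h.elim fun p hp => ⟨p, fun w hw => hSU (hp w hw)⟩

lemma of_adj (h : ReachableIn G S x y) (hyz : G.Adj y z) (hz : z ∈ S) : ReachableIn G S x z :=
  h.trans ⟨hyz.toWalk, by simp [h.mem_right, hz]⟩

lemma of_reachable_induce {x y : S} (h : (G.induce S).Reachable x y) : ReachableIn G S x y :=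
  h.elim fun p => ⟨p.map (Embedding.induce S).toHom, fun z hz => by
    obtain ⟨w, -, rfl⟩ := List.mem_map.1 (Walk.support_map _ p ▸ hz)
    exact w.2⟩

lemma connected_induce_setOf (hx : x ∈ S) : (G.induce {y | ReachableIn G S x y}).Connected := by
  classical
  refine induce_connected_of_patches x (refl hx) fun {y} ⟨p, hp⟩ => ?_
  refine ⟨{z | z ∈ p.support}, fun z hz => ?_, p.start_mem_support, p.end_mem_support,
    p.connected_induce_support.preconnected _ _⟩
  exact ⟨p.takeUntil z hz, fun w hw => hp w (p.support_takeUntil_subset_support hz hw)⟩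

lemma setOf_eq_of_connected {C : Set V} (hCU : C ⊆ U) (hC : (G.induce C).Connected)
    (hx : x ∈ C) (hclosed : ∀ y z, y ∈ C → z ∈ U → G.Adj y z → z ∈ C) :
    {y | ReachableIn G U x y} = C := by
  refine Set.Subset.antisymm ?_ fun y hy =>
    (of_reachable_induce (hC.preconnected ⟨x, hx⟩ ⟨y, hy⟩)).mono hCU
  rintro y ⟨p, hp⟩
  induction p with
  | nil => exact hx
  | cons hadj q ih =>
    exact ih (hclosed _ _ hx (hp _ (by simp)) hadj) fun w hw => hp w (by simp [hw])

end ReachableIn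

namespace SearchTree

section

variable (T : SearchTree G) {a u v w x y : V}

lemma descSet_subset (h : T.anc u w) : T.descSet w ⊆ T.descSet u :=
  fun _ hx => T.trans _ _ _ h hx

lemma reachableIn_descSet (hx : T.anc u x) (hy : T.anc u y) :
    ReachableIn G (T.descSet u) x y :=
  .of_reachable_induce ((T.desc_connected u).preconnected ⟨x, hx⟩ ⟨y, hy⟩)

lemma eq_of_descSet_eq {T T' : SearchTree G} (h : ∀ u, T.descSet u = T'.descSet u) : T = T' := by
  obtain ⟨anc, _⟩ := T
  obtain ⟨anc', _⟩ := T'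
  obtain rfl : anc = anc' := funext fun u => funext fun w => propext (Set.ext_iff.1 (h u) w)
  rfl

lemma ncard_descSet_lt [Finite V] (h : T.anc u w) (hne : u ≠ w) :
    (T.descSet w).ncard < (T.descSet u).ncard :=
  Set.ncard_lt_ncard ⟨T.descSet_subset h, fun hwu => hne (T.antisymm _ _ h (hwu (T.refl u)))⟩

lemma exists_lowest [Finite V] {P : V → Prop} (h : ∃ v, P v) :
    ∃ v, P v ∧ ∀ w, P w → T.anc v w → w = v := by
  obtain ⟨v, hv, hmin⟩ := Set.exists_min_image {v | P v} (fun v => (T.descSet v).ncard)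
    (Set.toFinite _) h
  refine ⟨v, hv, fun w hw hvw => by_contra fun hwv => ?_⟩
  exact (hmin w hw).not_gt (T.ncard_descSet_lt hvw (Ne.symm hwv))

lemma exists_highest [Finite V] {P : V → Prop} (h : ∃ v, P v) :
    ∃ v, P v ∧ ∀ w, P w → T.anc w v → w = v := by
  obtain ⟨v, hv, hmax⟩ := Set.exists_max_image {v | P v} (fun v => (T.descSet v).ncard)
    (Set.toFinite _) h
  refine ⟨v, hv, fun w hw hwv => by_contra fun hne => ?_⟩
  exact (hmax w hw).not_gt (T.ncard_descSet_lt hwv hne)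

def IsParent (a v : V) : Prop :=
  a ≠ v ∧ T.anc a v ∧ ∀ u, T.anc u v → u = v ∨ T.anc u a

lemma exists_isParent [Finite V] (h : T.anc u v) (hne : u ≠ v) : ∃ a, T.IsParent a v := by
  obtain ⟨a, ⟨hav, hne⟩, hlow⟩ := T.exists_lowest (P := fun a => T.anc a v ∧ a ≠ v) ⟨u, h, hne⟩
  refine ⟨a, hne, hav, fun w hw => or_iff_not_imp_left.2 fun hwv => ?_⟩
  rcases T.chain w a v hw hav with h | h
  exacts [h, hlow w ⟨hw, hwv⟩ h ▸ T.refl a]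

namespace IsParent

variable {T} (h : T.IsParent a v)
include h

lemma descSet_eq : T.descSet v = {x | ReachableIn G (T.descSet a \ {a}) v x} := by
  obtain ⟨hav, hanc, hpar⟩ := h
  refine (ReachableIn.setOf_eq_of_connected (C := T.descSet v)
    (U := T.descSet a \ {a}) (fun x hx => ⟨T.trans _ _ _ hanc hx, ?_⟩)
    (T.desc_connected v) (T.refl v) fun y z hy hz hyz => ?_).symm
  · rintro rfl
    exact hav (T.antisymm _ _ hanc hx)
  rcases T.edge_comparable y z hyz with hyz | hzy
  · exact T.trans _ _ _ hy hyz
  rcases T.chain z v y hzy hy with hzv | hvz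
  · rcases hpar z hzv with rfl | hza
    exacts [T.refl z, absurd (T.antisymm _ _ hza hz.1) hz.2]
  · exact hvz

end IsParent

end

section Rotation

variable (T : SearchTree G) (a v : V) {u w x : V}

/-- The set `B′` of the rotation at `v` with parent `a`. -/
def rotComponent : Set V := {x | ReachableIn G (T.descSet a \ {v}) a x}

open Classical in
noncomputable def rotDescSet (u : V) : Set V :=
  if u = v then T.descSet a else if u = a then T.rotComponent a v else T.descSet u

variable {T a v}

lemma rotComponent_subset : T.rotComponent a v ⊆ T.descSet a \ {v} := fun _ hx => hx.mem_right

lemma rotDescSet_self : T.rotDescSet a v v = T.descSet a := if_pos rfl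

lemma rotDescSet_of_ne (huv : u ≠ v) (hua : u ≠ a) : T.rotDescSet a v u = T.descSet u := by
  simp [rotDescSet, huv, hua]

namespace IsParent

variable (h : T.IsParent a v)
include h

lemma anc_parent (hu : T.anc u v) (huv : u ≠ v) : T.anc u a :=
  (h.2.2 u hu).resolve_left huv

lemma parent_mem_rotComponent : a ∈ T.rotComponent a v := .refl ⟨T.refl a, h.1⟩

lemma rotDescSet_parent : T.rotDescSet a v a = T.rotComponent a v := by
  simp [rotDescSet, h.1]

-- Stated with `v = u` and `a = u` so that `rfl` patterns eliminate `u`, not `a` or `v`.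
lemma rotDescSet_cases (u : V) :
    v = u ∧ T.rotDescSet a v u = T.descSet a ∨ a = u ∧ T.rotDescSet a v u = T.rotComponent a v ∨
      u ≠ v ∧ u ≠ a ∧ T.rotDescSet a v u = T.descSet u := by
  by_cases huv : u = v
  · exact .inl ⟨huv.symm, huv ▸ rotDescSet_self⟩
  by_cases hua : u = a
  · exact .inr (.inl ⟨hua.symm, hua ▸ h.rotDescSet_parent⟩)
  · exact .inr (.inr ⟨huv, hua, rotDescSet_of_ne huv hua⟩)

lemma rotDescSet_subset_descSet (huv : u ≠ v) : T.rotDescSet a v u ⊆ T.descSet u := by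
  rcases h.rotDescSet_cases u with ⟨rfl, -⟩ | ⟨rfl, hu⟩ | ⟨-, -, hu⟩
  exacts [absurd rfl huv, hu ▸ fun _ hx => (rotComponent_subset hx).1, hu.le]

lemma descSet_subset_diff (hw : T.anc a w) (hwa : w ≠ a) (hwv : w ≠ v) :
    T.descSet w ⊆ T.descSet a \ {v} := fun x hx =>
  ⟨T.trans _ _ _ hw hx, by rintro rfl; exact hwa (T.antisymm _ _ (h.anc_parent hx hwv) hw)⟩

lemma descSet_subset_rotComponent (hw : T.anc a w) (hwa : w ≠ a) (hwv : w ≠ v)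
    (hx : T.anc w x) (hxB : x ∈ T.rotComponent a v) : T.descSet w ⊆ T.rotComponent a v :=
  fun _ hy => hxB.trans ((T.reachableIn_descSet hx hy).mono (h.descSet_subset_diff hw hwa hwv))

lemma mem_rotDescSet_self (u : V) : u ∈ T.rotDescSet a v u := by
  rcases h.rotDescSet_cases u with ⟨rfl, hu⟩ | ⟨rfl, hu⟩ | ⟨-, -, hu⟩ <;> rw [hu]
  exacts [h.2.1, h.parent_mem_rotComponent, T.refl u]

lemma rotDescSet_subset (hw : w ∈ T.rotDescSet a v u) :
    T.rotDescSet a v w ⊆ T.rotDescSet a v u := by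
  -- nine cases: each of `u`, `w` is `v`, `a` or another vertex, in this order
  rcases h.rotDescSet_cases u with ⟨rfl, hu⟩ | ⟨rfl, hu⟩ | ⟨huv, hua, hu⟩ <;>
  rewrite [hu] at hw ⊢ <;>
  rcases h.rotDescSet_cases w with ⟨rfl, hw'⟩ | ⟨rfl, hw'⟩ | ⟨hwv, hwa, hw'⟩ <;>
  rewrite [hw']
  · exact subset_rfl
  · exact rotComponent_subset.trans Set.sdiff_subset
  · exact T.descSet_subset hw
  · exact absurd rfl (rotComponent_subset hw).2
  · exact subset_rfl
  · exact h.descSet_subset_rotComponent (rotComponent_subset hw).1 hwa hwv (T.refl w) hw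
  · exact T.descSet_subset (h.anc_parent hw huv)
  · exact (rotComponent_subset.trans Set.sdiff_subset).trans (T.descSet_subset hw)
  · exact T.descSet_subset hw

lemma rotDescSet_antisymm (hw : w ∈ T.rotDescSet a v u) (hu : u ∈ T.rotDescSet a v w) :
    u = w := by
  rcases h.rotDescSet_cases u with ⟨rfl, hu'⟩ | ⟨rfl, hu'⟩ | ⟨huv, hua, hu'⟩ <;>
  rewrite [hu'] at hw <;>
  rcases h.rotDescSet_cases w with ⟨rfl, hw'⟩ | ⟨rfl, hw'⟩ | ⟨hwv, hwa, hw'⟩ <;>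
  rewrite [hw'] at hu
  · rfl
  · exact absurd rfl (rotComponent_subset hu).2
  · exact absurd (T.antisymm _ _ (h.anc_parent hu hwv) hw) hwa
  · exact absurd rfl (rotComponent_subset hw).2
  · rfl
  · exact T.antisymm _ _ (rotComponent_subset hw).1 hu
  · exact absurd (T.antisymm _ _ (h.anc_parent hw huv) hu) hua
  · exact T.antisymm _ _ hw (rotComponent_subset hu).1
  · exact T.antisymm _ _ hw hu

lemma rotDescSet_chain (hxu : x ∈ T.rotDescSet a v u) (hxw : x ∈ T.rotDescSet a v w) :
    w ∈ T.rotDescSet a v u ∨ u ∈ T.rotDescSet a v w := by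
  have haB := h.parent_mem_rotComponent
  rcases h.rotDescSet_cases u with ⟨rfl, hu⟩ | ⟨rfl, hu⟩ | ⟨huv, hua, hu⟩ <;>
  rewrite [hu] at hxu ⊢ <;>
  rcases h.rotDescSet_cases w with ⟨rfl, hw⟩ | ⟨rfl, hw⟩ | ⟨hwv, hwa, hw⟩ <;>
  rewrite [hw] at hxw ⊢
  · exact .inl h.2.1
  · exact .inl (T.refl a)
  · exact (T.chain a w x hxu hxw).imp id fun hwa => T.trans _ _ _ hwa h.2.1
  · exact .inr (T.refl a)
  · exact .inl haB
  · rcases T.chain a w x (rotComponent_subset hxu).1 hxw with haw | hwa'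
    · exact .inl (h.descSet_subset_rotComponent haw hwa hwv hxw hxu (T.refl w))
    · exact .inr hwa'
  · exact (T.chain u a x hxu hxw).imp (fun hua => T.trans _ _ _ hua h.2.1) id
  · rcases T.chain a u x (rotComponent_subset hxw).1 hxu with hau | hua'
    · exact .inr (h.descSet_subset_rotComponent hau hua huv hxu hxw (T.refl u))
    · exact .inl hua'
  · exact T.chain u w x hxu hxw

lemma rotDescSet_edge_comparable (huw : G.Adj u w) : w ∈ T.rotDescSet a v u ∨ u ∈ T.rotDescSet a v w := by
  have haB := h.parent_mem_rotComponent
  rcases h.rotDescSet_cases u with ⟨rfl, hu⟩ | ⟨rfl, hu⟩ | ⟨huv, hua, hu⟩ <;>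
  rewrite [hu] <;>
  rcases h.rotDescSet_cases w with ⟨rfl, hw⟩ | ⟨rfl, hw⟩ | ⟨hwv, hwa, hw⟩ <;>
  rewrite [hw]
  · exact absurd huw (G.loopless.irrefl v)
  · exact .inl (T.refl a)
  · exact (T.edge_comparable v w huw).imp (T.trans _ _ _ h.2.1) id
  · exact .inr (T.refl a)
  · exact absurd huw (G.loopless.irrefl a)
  · exact (T.edge_comparable a w huw).imp (fun haw => haB.of_adj huw ⟨haw, hwv⟩) id
  · exact (T.edge_comparable u v huw).imp id (T.trans _ _ _ h.2.1)
  · exact (T.edge_comparable u a huw).imp id fun hau => haB.of_adj huw.symm ⟨hau, huv⟩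
  · exact T.edge_comparable u w huw

lemma rotDescSet_connected (u : V) : (G.induce (T.rotDescSet a v u)).Connected := by
  rcases h.rotDescSet_cases u with ⟨rfl, hu⟩ | ⟨rfl, hu⟩ | ⟨-, -, hu⟩ <;> rewrite [hu]
  exacts [T.desc_connected a, ReachableIn.connected_induce_setOf ⟨T.refl a, h.1⟩,
    T.desc_connected u]

lemma exists_rotDescSet_eq_univ : ∃ r, ∀ x, x ∈ T.rotDescSet a v r := by
  obtain ⟨r, hr⟩ := T.root
  rcases h.rotDescSet_cases r with ⟨rfl, -⟩ | ⟨rfl, -⟩ | ⟨-, -, hr'⟩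
  · exact absurd (T.antisymm _ _ h.2.1 (hr a)) h.1
  · exact ⟨v, fun x => rotDescSet_self (T := T) ▸ hr x⟩
  · exact ⟨r, fun x => hr' ▸ hr x⟩

end IsParent

noncomputable def rotate (h : T.IsParent a v) : SearchTree G where
  anc u w := w ∈ T.rotDescSet a v u
  refl := h.mem_rotDescSet_self
  antisymm _ _ hw hu := h.rotDescSet_antisymm hw hu
  trans _ _ _ hw hx := h.rotDescSet_subset hw hx
  chain _ _ _ hu hw := h.rotDescSet_chain hu hw
  root := h.exists_rotDescSet_eq_univ
  edge_comparable _ _ := h.rotDescSet_edge_comparable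
  desc_connected := h.rotDescSet_connected

lemma isRotation_rotate (h : T.IsParent a v) : IsRotation T (T.rotate h) a v :=
  ⟨h.1, h.2.1, rotDescSet_self, fun _ hwa hwv => rotDescSet_of_ne hwv hwa⟩

end Rotation

lemma ncard_anc_le_height [Fintype V] (T : SearchTree G) (v : V) :
    {u | T.anc u v}.ncard ≤ T.height :=
  Finset.le_sup (f := fun v => {u | T.anc u v}.ncard) (Finset.mem_univ v)

noncomputable def potential (T₀ T : SearchTree G) : ℕ :=
  {p : V × V | T.anc p.1 p.2 ∧ T₀.anc p.2 p.1}.ncard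

open Finset in
lemma potential_le [Fintype V] (T₀ T : SearchTree G) :
    potential T₀ T ≤ T₀.height * Fintype.card V := by
  classical
  calc potential T₀ T ≤ {p : V × V | T₀.anc p.2 p.1}.ncard :=
        Set.ncard_le_ncard fun _ hp => hp.2
    _ = #{p : V × V | T₀.anc p.2 p.1} := by rw [Set.ncard_eq_toFinset_card']; simp
    _ ≤ T₀.height * #(Finset.univ : Finset V) :=
        Finset.card_le_mul_card_image_of_maps_to (f := Prod.fst) (fun _ _ => Finset.mem_univ _)
          _ fun u _ => ?_
  calc #{p ∈ ({p : V × V | T₀.anc p.2 p.1} : Finset (V × V)) | p.1 = u}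
      ≤ #{w | T₀.anc w u} := Finset.card_le_card_of_injOn Prod.snd
          fun p hp => by
            simp only [coe_filter, mem_filter, mem_univ, true_and, Set.mem_ofPred_eq] at hp ⊢
            exact hp.2 ▸ hp.1
          fun p hp q hq hpq => Prod.ext (by simp_all) hpq
    _ = {w | T₀.anc w u}.ncard := by rw [Set.ncard_eq_toFinset_card']; simp
    _ ≤ T₀.height := T₀.ncard_anc_le_height u

variable {T₀ T : SearchTree G} {a v : V}

/-- The rotation destroys the pair `(a, v)` and, because every `T₀`-ancestor of `v` is already a
`T`-ancestor, creates no new pair. -/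
lemma potential_rotate_lt [Finite V] (h : T.IsParent a v) (hva : T₀.anc v a)
    (hanc : ∀ w, T₀.anc w v → T.anc w v) : potential T₀ (T.rotate h) < potential T₀ T := by
  refine Set.ncard_lt_ncard ⟨fun ⟨u, w⟩ ⟨huw, hwu⟩ => ⟨?_, hwu⟩, fun hsub => ?_⟩
  · rcases eq_or_ne v u with rfl | hvu
    · rcases h.2.2 w (hanc w hwu) with rfl | hwa
      · exact T.refl w
      · have haw : w ∈ T.descSet a := rotDescSet_self (T := T) ▸ huw
        obtain rfl : w = a := T.antisymm _ _ hwa haw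
        exact absurd (T₀.antisymm _ _ hwu hva) h.1
    · exact h.rotDescSet_subset_descSet hvu.symm huw
  · have hv : v ∈ T.rotDescSet a v a :=
      (hsub (show (a, v) ∈ {p : V × V | T.anc p.1 p.2 ∧ T₀.anc p.2 p.1} from ⟨h.2.1, hva⟩)).1
    rw [h.rotDescSet_parent] at hv
    exact (rotComponent_subset hv).2 rfl

section Inversion

variable (hset : ∀ w, T₀.anc w v → w ≠ v → T.descSet w = T₀.descSet w)
include hset

lemma anc_of_anc_of_descSet_eq (w : V) (hw : T₀.anc w v) : T.anc w v := by
  by_cases hwv : w = v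
  · exact hwv ▸ T.refl v
  · exact (Set.ext_iff.1 (hset w hw hwv) v).2 hw

variable (hv : T.descSet v ≠ T₀.descSet v)
include hv

lemma exists_anc_ne : ∃ u, T.anc u v ∧ u ≠ v := by
  by_contra! hroot
  obtain ⟨r, hr⟩ := T.root
  obtain ⟨r₀, hr₀⟩ := T₀.root
  rcases eq_or_ne r₀ v with rfl | hr₀v
  · exact hv (Set.ext fun x => iff_of_true (hroot r (hr _) ▸ hr x) (hr₀ x))
  · exact hr₀v (hroot r₀ (anc_of_anc_of_descSet_eq hset r₀ (hr₀ v)))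

/-- Otherwise `a` would be the parent of `v` in both trees, with the same subtree. -/
lemma IsParent.not_anc (ha : T.IsParent a v) : ¬ T₀.anc a v := fun hav => by
  have hpar₀ : T₀.IsParent a v := ⟨ha.1, hav, fun w hw => or_iff_not_imp_left.2 fun hwv =>
    (Set.ext_iff.1 (hset w hw hwv) a).1 (ha.anc_parent (anc_of_anc_of_descSet_eq hset w hw) hwv)⟩
  exact hv (by rw [ha.descSet_eq, hpar₀.descSet_eq, hset a hav ha.1])

/-- The subtree of `a` joins `v` to `a` inside the `T₀`-subtree of the `T₀`-parent `p` of `v`,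
avoiding `p`; so `a` lies in the component of `v` there, which is the `T₀`-subtree of `v`. -/
lemma IsParent.anc_of_descSet_ne [Finite V] (ha : T.IsParent a v) : T₀.anc v a := by
  by_contra hva
  obtain ⟨r₀, hr₀⟩ := T₀.root
  obtain ⟨p, hp⟩ := T₀.exists_isParent (hr₀ v) fun h => hva (h ▸ hr₀ a)
  have hpa : T.anc p a := ha.anc_parent (anc_of_anc_of_descSet_eq hset p hp.2.1) hp.1
  have hap : a ≠ p := fun hap => ha.not_anc hset hv (hap ▸ hp.2.1)
  apply hva
  change a ∈ T₀.descSet v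
  rw [hp.descSet_eq, ← hset p hp.2.1 hp.1]
  exact (T.reachableIn_descSet ha.2.1 (T.refl a)).mono fun x hx =>
    ⟨T.trans _ _ _ hpa hx, by rintro rfl; exact hap (T.antisymm _ _ hx hpa)⟩

end Inversion

lemma exists_isParent_inverted [Finite V] (hne : T ≠ T₀) :
    ∃ a v, T.IsParent a v ∧ T₀.anc v a ∧ ∀ w, T₀.anc w v → T.anc w v := by
  obtain ⟨v, hv, hhigh⟩ := T₀.exists_highest (P := fun v => T.descSet v ≠ T₀.descSet v) <| by
    by_contra! h
    exact hne (eq_of_descSet_eq h)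
  have hset : ∀ w, T₀.anc w v → w ≠ v → T.descSet w = T₀.descSet w :=
    fun w hw hwv => by_contra fun hw' => hwv (hhigh w hw' hw)
  obtain ⟨u, hu, huv⟩ := exists_anc_ne hset hv
  obtain ⟨a, ha⟩ := T.exists_isParent hu huv
  exact ⟨a, v, ha, ha.anc_of_descSet_ne hset hv, anc_of_anc_of_descSet_eq hset⟩

variable (T₀ T) in
lemma edist_le_potential [Finite V] :
    (rotationGraph G).edist T T₀ ≤ potential T₀ T := by
  induction hk : potential T₀ T using Nat.strong_induction_on generalizing T with
  | _ k ih =>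
  rcases eq_or_ne T T₀ with rfl | hne
  · simp
  obtain ⟨a, v, ha, hva, hanc⟩ := exists_isParent_inverted hne
  have hlt := potential_rotate_lt ha hva hanc
  calc (rotationGraph G).edist T T₀
      ≤ (rotationGraph G).edist T (T.rotate ha) + (rotationGraph G).edist (T.rotate ha) T₀ :=
        SimpleGraph.edist_triangle
    _ ≤ 1 + potential T₀ (T.rotate ha) :=
        add_le_add (edist_le_one_iff_adj_or_eq.2 (.inl ⟨a, v, isRotation_rotate ha⟩))
          (ih _ (hk ▸ hlt) _ rfl)
    _ ≤ k := by norm_cast; omega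

end SearchTree

theorem diam_assoc_le_treedepth_general {V : Type} [Fintype V] (G : SimpleGraph V)
    (n td : ℕ) (hn : Nat.card V = n) (htd : treeDepth G ≤ td) :
    (rotationGraph G).ediam ≤ ((2 * td * n : ℕ) : ℕ∞) := by
  refine ediam_le_of_edist_le fun T T' => ?_
  obtain ⟨T₀, hT₀⟩ : ∃ T₀ : SearchTree G, T₀.height = treeDepth G :=
    Nat.sInf_mem (s := {h | ∃ T : SearchTree G, T.height = h}) ⟨T.height, T, rfl⟩
  have hpot (T : SearchTree G) : SearchTree.potential T₀ T ≤ td * n := by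
    refine (SearchTree.potential_le T₀ T).trans ?_
    rw [hT₀, ← Nat.card_eq_fintype_card, hn]
    exact Nat.mul_le_mul_right n htd
  calc (rotationGraph G).edist T T'
      ≤ (rotationGraph G).edist T T₀ + (rotationGraph G).edist T' T₀ :=
        SimpleGraph.edist_comm (u := T₀) (v := T') ▸ SimpleGraph.edist_triangle
    _ ≤ SearchTree.potential T₀ T + SearchTree.potential T₀ T' :=
        add_le_add (SearchTree.edist_le_potential T₀ T) (SearchTree.edist_le_potential T₀ T')
    _ ≤ ((2 * td * n : ℕ) : ℕ∞) := by
        norm_cast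
        linarith [hpot T, hpot T']

/-- Let `G` be a connected graph on `n` vertices with tree-depth
at most `td`. Then `δ(A(G)) ≤ 2 * td * n`. -/
theorem diam_assoc_le_treedepth {V : Type} [Fintype V] (G : SimpleGraph V)
    (hconn : G.Connected) (n td : ℕ) (hn : Nat.card V = n) (htd : treeDepth G ≤ td) :
    (rotationGraph G).ediam ≤ ((2 * td * n : ℕ) : ℕ∞) :=
  diam_assoc_le_treedepth_general G n td hn htd
end

section
/- Let p and q be positive integers and let α, β be integers with 0 ≤ α < p and 0 ≤ β < q. Define f(k) = p(p−1)/2 + q(q−1)/2 − k(k−1)/2 + αq + k(2p − 2α − 1) + |β − k|. Then for every integer k with 0 ≤ k ≤ q, one has f(k) ≥ min{f(0), f(q)}. -/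
open SimpleGraph

/-- The function `f` of Proposition 1:
`f k = C(p,2) + C(q,2) - C(k,2) + α q + k (2p - 2α - 1) + |β - k|`. -/
def fSPK (p q α β k : ℤ) : ℤ :=
  p * (p - 1) / 2 + q * (q - 1) / 2 - k * (k - 1) / 2 + α * q +
    k * (2 * p - 2 * α - 1) + |β - k|

/-! Doubling `f` clears the halvings: `2 f(k) = K + k (4(p - α) - 1 - k) + 2 |β - k|` with `K`
independent of `k`. On each of the pieces `[0, β]` and `[β, q]` the absolute value is affine, so
`2 f` is a concave quadratic there and is bounded below by its values at the ends of the piece.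
It remains to see that `f(β) ≥ min (f 0) (f q)`, which is a direct computation. -/

theorem min_mul_sub_le_mul_sub {R : Type*} [CommRing R] [LinearOrder R] [IsStrictOrderedRing R]
    {a b k : R} (s : R) (hak : a ≤ k) (hkb : k ≤ b) :
    min (a * (s - a)) (b * (s - b)) ≤ k * (s - k) := by
  rcases le_total (k + a) s with h | h
  · exact min_le_of_left_le (by nlinarith [mul_nonneg (sub_nonneg.2 hak) (sub_nonneg.2 h)])
  · exact min_le_of_right_le (by nlinarith [mul_nonneg (sub_nonneg.2 hkb) (sub_nonneg.2 h)])

section fSPK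

variable (p q α β : ℤ)

theorem two_mul_fSPK (k : ℤ) :
    2 * fSPK p q α β k =
      p * (p - 1) + q * (q - 1) + 2 * α * q + k * (4 * (p - α) - 1 - k) + 2 * |β - k| := by
  have hp := Int.two_mul_ediv_two_of_even (Int.even_mul_pred_self p)
  have hq := Int.two_mul_ediv_two_of_even (Int.even_mul_pred_self q)
  have hk := Int.two_mul_ediv_two_of_even (Int.even_mul_pred_self k)
  unfold fSPK
  linear_combination hp + hq - hk

variable {β}

theorem min_fSPK_zero_self_le {k : ℤ} (hk0 : 0 ≤ k) (hkβ : k ≤ β) :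
    min (fSPK p q α β 0) (fSPK p q α β β) ≤ fSPK p q α β k := by
  have hquad := min_mul_sub_le_mul_sub (4 * (p - α) - 3) hk0 hkβ
  have h0 := two_mul_fSPK p q α β 0
  have hβ := two_mul_fSPK p q α β β
  have hk := two_mul_fSPK p q α β k
  rw [abs_of_nonneg (by linarith : (0 : ℤ) ≤ β - 0)] at h0
  rw [sub_self, abs_zero] at hβ
  rw [abs_of_nonneg (sub_nonneg.2 hkβ)] at hk
  rw [min_le_iff] at hquad ⊢
  rcases hquad with h | h
  · left; linarith
  · right; linarith

theorem min_fSPK_self_le {k : ℤ} (hβk : β ≤ k) (hkq : k ≤ q) :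
    min (fSPK p q α β β) (fSPK p q α β q) ≤ fSPK p q α β k := by
  have hquad := min_mul_sub_le_mul_sub (4 * (p - α) + 1) hβk hkq
  have hβ := two_mul_fSPK p q α β β
  have hq := two_mul_fSPK p q α β q
  have hk := two_mul_fSPK p q α β k
  rw [sub_self, abs_zero] at hβ
  rw [abs_of_nonpos (by linarith : β - q ≤ 0)] at hq
  rw [abs_of_nonpos (sub_nonpos.2 hβk)] at hk
  rw [min_le_iff] at hquad ⊢
  rcases hquad with h | h
  · left; linarith
  · right; linarith

variable {p q α}

theorem min_fSPK_le_fSPK_self (hαp : α < p) (hβ0 : 0 ≤ β) (hβq : β < q) :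
    min (fSPK p q α β 0) (fSPK p q α β q) ≤ fSPK p q α β β := by
  have h0 := two_mul_fSPK p q α β 0
  have hβ := two_mul_fSPK p q α β β
  have hq := two_mul_fSPK p q α β q
  rw [abs_of_nonneg (by linarith : (0 : ℤ) ≤ β - 0)] at h0
  rw [sub_self, abs_zero] at hβ
  rw [abs_of_nonpos (by linarith : β - q ≤ 0)] at hq
  rw [min_le_iff]
  rcases le_or_gt β (4 * (p - α) - 3) with h | h
  · -- `2 (f β - f 0) = β (4(p - α) - 3 - β)`
    left; nlinarith [mul_nonneg hβ0 (sub_nonneg.2 h)]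
  · -- `2 (f β - f q) = (q - β) (q + β - 4(p - α) - 1)`, where `q + β ≥ 2β + 1 ≥ 8(p - α) - 3`
    right
    nlinarith [mul_nonneg (by linarith : (0 : ℤ) ≤ q - β)
      (by linarith : 0 ≤ q + β - 4 * (p - α) - 1)]

end fSPK

theorem fSPK_ge_min_general (p q α β : ℤ) (hαp : α < p) (hβ0 : 0 ≤ β) (hβq : β < q) :
    ∀ k : ℤ, 0 ≤ k → k ≤ q →
      min (fSPK p q α β 0) (fSPK p q α β q) ≤ fSPK p q α β k := by
  intro k hk0 hkq
  have hβ := min_fSPK_le_fSPK_self hαp hβ0 hβq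
  rcases le_total k β with hkβ | hβk
  · have := min_fSPK_zero_self_le p q α hk0 hkβ
    omega
  · have := min_fSPK_self_le p q α hβk hkq
    omega

/-- Let `p, q` be positive integers and `0 ≤ α < p`, `0 ≤ β < q`.
Then for every integer `k` with `0 ≤ k ≤ q`, `f k ≥ min (f 0) (f q)`. -/
theorem fSPK_ge_min (p q α β : ℤ) (hp : 0 < p) (hq : 0 < q)
    (hα0 : 0 ≤ α) (hαp : α < p) (hβ0 : 0 ≤ β) (hβq : β < q) :
    ∀ k : ℤ, 0 ≤ k → k ≤ q →
      min (fSPK p q α β 0) (fSPK p q α β q) ≤ fSPK p q α β k :=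
  fSPK_ge_min_general p q α β hαp hβ0 hβq
end

section
/- Let p, q be positive integers. If q ≥ 4p + 1, then δ(A(SPK_{p,q})) ≥ 2pq + p(p−1)/2; otherwise (i.e., if q ≤ 4p), δ(A(SPK_{p,q})) ≥ pq + ⌊q(q−1)/4⌋ + p(p−1)/2. -/
open SimpleGraph

/-!
Let `T₀` be the path `Q₀, …, Q_{q-1}, P₀, …, P_{p-1}` and `T₁` a path in which both the clique
and the independent set appear in reverse order, the `i`-th independent vertex lying above exactly
`c i` clique vertices. A rotation reverses a single ancestor pair and adjacent vertices stay
comparable, so every adjacent pair whose order differs in `T₀` and `T₁` is rotated along any walk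
between them. Call an independent vertex sunk if some tree of the walk puts it below the whole
clique; two independent vertices can only become incomparable when both are sunk. Counting
forced rotations (clique pairs, pairs `Q_i, P_j` with `c i ≤ j` or `Q_i` sunk, twice the pairs
`Q_i, P_j` with `Q_i` sunk and `j < c i`, and pairs of independent vertices not both sunk) gives at
least `C(p,2) + Σ (p - c i) + 2 Σ_{sunk} c i + C(q,2) - C(k,2)` rotations when `k` vertices sink.
For `q > 4p` take `c ≡ p`; otherwise take `c` balanced with total `⌈C(q,2)/2⌉`, which makes
`2 Σ_{sunk} c i ≥ C(k,2)` whichever vertices sink.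
-/

lemma Nat.two_mul_choose_two_add_self (n : ℕ) : 2 * n.choose 2 + n = n * n := by
  rw [Nat.choose_two_right, Nat.mul_div_cancel' (Nat.even_mul_pred_self n).two_dvd]
  cases n <;> simp [Nat.mul_succ]

lemma two_mul_mul_le_choose_two_sub {p q k : ℕ} (hq : 4 * p < q) (hk : k ≤ q) :
    2 * p * q ≤ 2 * p * k + (q.choose 2 - k.choose 2) := by
  have hq2 := Nat.two_mul_choose_two_add_self q
  have hk2 := Nat.two_mul_choose_two_add_self k
  obtain ⟨d, rfl⟩ := Nat.exists_eq_add_of_le hk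
  have : d * (4 * p) ≤ d * (2 * k + d - 1) := Nat.mul_le_mul_left d (by omega)
  have : 2 * p * (k + d) + k.choose 2 ≤ 2 * p * k + (k + d).choose 2 := by
    nlinarith
  omega

lemma two_mul_min_add_choose_two_le {q e r M k : ℕ} (hM : q.choose 2 ≤ 2 * M)
    (hqe : q * e = M + r) (hr : r < q) (hk : k ≤ q) :
    2 * min k r + k.choose 2 ≤ 2 * e * k := by
  have hq2 := Nat.two_mul_choose_two_add_self q
  have hk2 := Nat.two_mul_choose_two_add_self k
  rcases lt_or_ge q 4 with hq4 | hq4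
  · interval_cases q <;> interval_cases k <;> interval_cases r <;> omega
  -- after multiplying by `q` and using `4M ≥ q(q-1)`, the two cases reduce to
  -- `k(q-4)(q-k) ≥ 0` and `(q-k)(qk-4r) ≥ 0`
  refine Nat.le_of_mul_le_mul_left (c := q) ?_ (by omega)
  have hkM : k * q * q ≤ 4 * k * M + k * q := by nlinarith
  rcases le_total k r with hkr | hrk
  · rw [min_eq_left hkr]
    have : 0 ≤ ((q : ℤ) - 4) * ((q : ℤ) - k) * k :=
      mul_nonneg (mul_nonneg (by omega) (by omega)) (by omega)
    zify at *
    nlinarith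
  · rw [min_eq_right hrk]
    have : 0 ≤ ((q : ℤ) - k) * ((q : ℤ) * k - 4 * r) :=
      mul_nonneg (by omega) (by nlinarith)
    zify at *
    nlinarith

open Finset in
lemma Fin.card_filter_le_val (n m : ℕ) : #{i : Fin n | m ≤ (i : ℕ)} = n - m := by
  have h := Finset.card_filter_add_card_filter_not (s := (univ : Finset (Fin n))) (· < m)
  simp only [Fin.card_filter_val_lt, not_lt, card_univ, Fintype.card_fin] at h
  omega

namespace SimpleGraph

lemma le_edist_of_forall_le_length {V : Type*} {G : SimpleGraph V} {u v : V} {N : ℕ}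
    (h : ∀ w : G.Walk u v, N ≤ w.length) : (N : ℕ∞) ≤ G.edist u v :=
  le_sInf <| by rintro _ ⟨w, rfl⟩; exact Nat.cast_le.mpr (h w)

end SimpleGraph

section Rotations

variable {V : Type} {G : SimpleGraph V}

lemma IsRotation.eq_of_anc_of_anc {T T' : SearchTree G} {a b u v : V}
    (hrot : IsRotation T T' a b) (huv : u ≠ v) (h : T.anc u v) (h' : T'.anc v u) :
    a = u ∧ b = v := by
  obtain ⟨hab, hanc, -, hoth⟩ := hrot
  have keep (x : V) (hxa : x ≠ a) (hxb : x ≠ b) : T'.anc x = T.anc x :=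
    hoth x hxa hxb
  by_cases hva : v = a
  · subst hva
    by_cases hub : u = b
    · exact absurd (T.antisymm _ _ hanc (hub ▸ h)) hab
    · exact absurd (T'.antisymm _ _ (keep u huv hub ▸ h) h') huv
  by_cases hvb : v = b
  · subst hvb
    by_cases hua : u = a
    · exact ⟨hua.symm, rfl⟩
    · exact absurd (T'.antisymm _ _ (keep u hua huv ▸ h) h') huv
  · exact absurd (T.antisymm _ _ h (keep v hva hvb ▸ h')) huv

noncomputable def rotationPairOf {T T' : SearchTree G} (h : (rotationGraph G).Adj T T') : V × V :=
  (h.choose, h.choose_spec.choose)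

lemma isRotation_rotationPairOf {T T' : SearchTree G} (h : (rotationGraph G).Adj T T') :
    IsRotation T T' (rotationPairOf h).1 (rotationPairOf h).2 :=
  h.choose_spec.choose_spec

noncomputable def rotationPairs {T T' : SearchTree G} (w : (rotationGraph G).Walk T T') :
    List (V × V) :=
  w.darts.map fun d => rotationPairOf d.adj

@[simp]
lemma rotationPairs_cons {T T' T'' : SearchTree G} (h : (rotationGraph G).Adj T T')
    (w : (rotationGraph G).Walk T' T'') :
    rotationPairs (.cons h w) = rotationPairOf h :: rotationPairs w := rfl

lemma length_rotationPairs {T T' : SearchTree G} (w : (rotationGraph G).Walk T T') :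
    (rotationPairs w).length = w.length := by
  simp [rotationPairs]

lemma rotationPairs_append {T T' T'' : SearchTree G} (w : (rotationGraph G).Walk T T')
    (w' : (rotationGraph G).Walk T' T'') :
    rotationPairs (w.append w') = rotationPairs w ++ rotationPairs w' := by
  simp [rotationPairs]

lemma mem_rotationPairs_or_exists_incomparable {T T' : SearchTree G}
    (w : (rotationGraph G).Walk T T') {u v : V} (huv : u ≠ v) (h : T.anc u v)
    (h' : T'.anc v u) :
    (u, v) ∈ rotationPairs w ∨ ∃ S ∈ w.support, ¬ S.anc u v ∧ ¬ S.anc v u := by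
  induction w with
  | nil => exact absurd (SearchTree.antisymm _ u v h h') huv
  | @cons T S T' hadj w ih =>
    by_cases hpair : rotationPairOf hadj = (u, v)
    · simp [hpair]
    by_cases hS : S.anc u v
    · rcases ih hS h' with hmem | ⟨S', hS', hinc⟩
      · simp [hmem]
      · exact .inr ⟨S', by simp [hS'], hinc⟩
    by_cases hS' : S.anc v u
    · obtain ⟨rfl, rfl⟩ := (isRotation_rotationPairOf hadj).eq_of_anc_of_anc huv h hS'
      exact absurd rfl hpair
    · exact .inr ⟨S, by simp, hS, hS'⟩

lemma mem_rotationPairs_of_adj {T T' : SearchTree G} (w : (rotationGraph G).Walk T T')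
    {u v : V} (hadj : G.Adj u v) (h : T.anc u v) (h' : T'.anc v u) :
    (u, v) ∈ rotationPairs w := by
  refine (mem_rotationPairs_or_exists_incomparable w hadj.ne h h').resolve_right ?_
  rintro ⟨S, -, huv, hvu⟩
  exact (S.edge_comparable u v hadj).elim huv hvu

lemma mem_rotationPairs_of_adj_of_mem_support {T T' S : SearchTree G}
    (w : (rotationGraph G).Walk T T') (hS : S ∈ w.support) {u v : V} (hadj : G.Adj u v)
    (h : T.anc u v) (hSvu : S.anc v u) (h' : T'.anc u v) :
    (u, v) ∈ rotationPairs w ∧ (v, u) ∈ rotationPairs w := by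
  classical
  rw [← w.take_spec hS, rotationPairs_append]
  exact ⟨List.mem_append_left _ (mem_rotationPairs_of_adj _ hadj h hSvu),
    List.mem_append_right _ (mem_rotationPairs_of_adj _ hadj.symm hSvu h')⟩

lemma card_le_length_of_forall_mem_rotationPairs {T T' : SearchTree G}
    (w : (rotationGraph G).Walk T T') {ι : Type*} [Fintype ι] {f : ι → V × V}
    (hf : Function.Injective f) (hmem : ∀ i, f i ∈ rotationPairs w) :
    Fintype.card ι ≤ w.length := by
  classical
  calc Fintype.card ι = (Finset.univ.image f).card := (Finset.card_image_of_injective _ hf).symm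
    _ ≤ (rotationPairs w).toFinset.card :=
      Finset.card_le_card fun x hx => by
        obtain ⟨i, -, rfl⟩ := Finset.mem_image.mp hx
        exact List.mem_toFinset.mpr (hmem i)
    _ ≤ (rotationPairs w).length := List.toFinset_card_le _
    _ = w.length := length_rotationPairs w

end Rotations

namespace SearchTree

variable {V : Type} {G : SimpleGraph V} {α : Type*} [LinearOrder α]

def ofRank [Finite V] [Nonempty V] (ρ : V → α) (hρ : Function.Injective ρ)
    (hconn : ∀ v, (G.induce {u | ρ v ≤ ρ u}).Connected) : SearchTree G where
  anc u v := ρ u ≤ ρ v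
  refl _ := le_rfl
  antisymm _ _ h h' := hρ (le_antisymm h h')
  trans _ _ _ := le_trans
  chain u v _ _ _ := le_total (ρ u) (ρ v)
  root := (Finite.exists_min ρ).imp fun _ h v => h v
  edge_comparable u v _ := le_total (ρ u) (ρ v)
  desc_connected := hconn

@[simp]
lemma ofRank_anc [Finite V] [Nonempty V] (ρ : V → α) (hρ) (hconn) (u v : V) :
    (ofRank (G := G) ρ hρ hconn).anc u v ↔ ρ u ≤ ρ v := Iff.rfl

end SearchTree

namespace SPK

open Finset

variable {p q : ℕ}

lemma adj_inl_of_ne {j : Fin p} {v : Fin p ⊕ Fin q} (h : .inl j ≠ v) :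
    (SPK p q).Adj (.inl j) v :=
  ⟨h, .inl rfl⟩

lemma connected_induce {U : Set (Fin p ⊕ Fin q)}
    (hU : (∃ j, .inl j ∈ U) ∨ ∃ v, U = {v}) : ((SPK p q).induce U).Connected := by
  obtain ⟨j, hj⟩ | ⟨v, rfl⟩ := hU
  · refine (SimpleGraph.connected_iff_exists_forall_reachable _).mpr ⟨⟨_, hj⟩, fun x => ?_⟩
    by_cases hx : x = ⟨_, hj⟩
    · rw [hx]
    · have hadj : ((SPK p q).induce U).Adj ⟨_, hj⟩ x :=
        adj_inl_of_ne fun h => hx (Subtype.ext h.symm)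
      exact hadj.reachable
  · have : Nonempty ({v} : Set (Fin p ⊕ Fin q)) := ⟨⟨v, rfl⟩⟩
    exact .of_subsingleton

/-- A clique vertex is comparable with both independent vertices and cannot lie below either. -/
lemma anc_inl_of_incomparable {T : SearchTree (SPK p q)} {i i' : Fin q}
    (h : ¬ T.anc (.inr i) (.inr i')) (h' : ¬ T.anc (.inr i') (.inr i)) (j : Fin p) :
    T.anc (.inl j) (.inr i) := by
  have hadj (k : Fin q) : (SPK p q).Adj (.inl j) (.inr k) := adj_inl_of_ne Sum.inl_ne_inr
  refine (T.edge_comparable _ _ (hadj i)).resolve_right fun hij => ?_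
  rcases T.edge_comparable _ _ (hadj i') with hji' | hi'j
  · exact h (T.trans _ _ _ hij hji')
  · exact (T.chain _ _ _ hij hi'j).elim h h'

section Trees

def rank₀ : Fin p ⊕ Fin q → ℕ
  | .inl j => q + j
  | .inr i => i

lemma rank₀_injective : Function.Injective (rank₀ (p := p) (q := q)) := by
  rintro (j | i) (j' | i') h <;> simp only [rank₀] at h
  · exact congrArg _ (Fin.ext (by omega))
  · have := i'.isLt; omega
  · have := i.isLt; omega
  · exact congrArg _ (Fin.ext h)

def tree₀ (hp : 0 < p) : SearchTree (SPK p q) :=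
  haveI : Nonempty (Fin p ⊕ Fin q) := ⟨.inl ⟨0, hp⟩⟩
  .ofRank rank₀ rank₀_injective fun v =>
    connected_induce <| .inl ⟨⟨p - 1, by omega⟩, by
      rcases v with j | i <;> simp only [Set.mem_ofPred_eq, rank₀] <;> omega⟩

/-- `c i` is the number of clique vertices that `tree₁` places below the `i`-th
independent vertex; only the first independent vertex may have none, as otherwise the
independent vertices below it would form a disconnected subtree. -/
structure IsDepthProfile (p : ℕ) (c : Fin q → ℕ) : Prop where
  monotone : Monotone c
  le : ∀ i, c i ≤ p
  eq_zero : ∀ i, c i = 0 → (i : ℕ) = 0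

/-- Sorting key of `tree₁`: clique vertices in decreasing order, each independent
vertex `i` just below the clique vertex `P_{c i}`, ties between independent vertices broken
in decreasing order. -/
def rank₁ (c : Fin q → ℕ) : Fin p ⊕ Fin q → ℕ ×ₗ ℕ
  | .inl j => toLex (p - j, 0)
  | .inr i => toLex (p - c i, q - i)

lemma rank₁_injective (c : Fin q → ℕ) : Function.Injective (rank₁ (p := p) c) := by
  rintro (j | i) (j' | i') h <;> simp only [rank₁, toLex_inj, Prod.mk.injEq] at h
  · have := j.isLt; have := j'.isLt
    exact congrArg _ (Fin.ext (by omega))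
  · have := i'.isLt; omega
  · have := i.isLt; omega
  · have := i.isLt; have := i'.isLt
    exact congrArg _ (Fin.ext (by omega))

variable {c : Fin q → ℕ}

lemma connected_induce_rank₁ (hp : 0 < p) (hc : IsDepthProfile p c) (v : Fin p ⊕ Fin q) :
    ((SPK p q).induce {u | rank₁ c v ≤ rank₁ c u}).Connected := by
  apply connected_induce
  rcases v with j | i
  · exact .inl ⟨j, (le_rfl : rank₁ c (.inl j) ≤ _)⟩
  by_cases hci : c i = 0
  · refine .inr ⟨.inr i, Set.eq_singleton_iff_unique_mem.mpr ⟨(le_rfl : rank₁ c (.inr i) ≤ _), ?_⟩⟩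
    have hi := hc.eq_zero i hci
    rintro (j | i') hu <;> simp only [Set.mem_ofPred_eq, rank₁, Prod.Lex.toLex_le_toLex, hci] at hu
    · omega
    · have := hc.le i'; have := i'.isLt
      exact congrArg Sum.inr (Fin.ext (by omega))
  · refine .inl ⟨⟨0, hp⟩, ?_⟩
    simp only [Set.mem_ofPred_eq, rank₁, Prod.Lex.toLex_le_toLex]
    omega

def tree₁ (hp : 0 < p) (hc : IsDepthProfile p c) : SearchTree (SPK p q) :=
  haveI : Nonempty (Fin p ⊕ Fin q) := ⟨.inl ⟨0, hp⟩⟩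
  .ofRank (rank₁ c) (rank₁_injective c) (connected_induce_rank₁ hp hc)

variable (hp : 0 < p) (hc : IsDepthProfile p c)

lemma tree₀_anc_inl_inl (j j' : Fin p) :
    (tree₀ (q := q) hp).anc (.inl j) (.inl j') ↔ j ≤ j' := by
  simp only [tree₀, SearchTree.ofRank_anc, rank₀, Fin.le_def]
  omega

lemma tree₀_anc_inr_inr (i i' : Fin q) :
    (tree₀ (p := p) hp).anc (.inr i) (.inr i') ↔ i ≤ i' := by
  simp only [tree₀, SearchTree.ofRank_anc, rank₀, Fin.le_def]

lemma tree₀_anc_inr_inl (i : Fin q) (j : Fin p) : (tree₀ hp).anc (.inr i) (.inl j) := by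
  simp only [tree₀, SearchTree.ofRank_anc, rank₀]
  omega

lemma tree₁_anc_inl_inl {j j' : Fin p} (h : j ≤ j') : (tree₁ hp hc).anc (.inl j') (.inl j) := by
  simp only [tree₁, SearchTree.ofRank_anc, rank₁, Prod.Lex.toLex_le_toLex, Fin.le_def] at h ⊢
  omega

lemma tree₁_anc_inr_inr {i i' : Fin q} (h : i ≤ i') : (tree₁ hp hc).anc (.inr i') (.inr i) := by
  have := hc.monotone h
  simp only [tree₁, SearchTree.ofRank_anc, rank₁, Prod.Lex.toLex_le_toLex, Fin.le_def] at h ⊢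
  omega

lemma tree₁_anc_inl_inr {i : Fin q} {j : Fin p} (h : c i ≤ j) :
    (tree₁ hp hc).anc (.inl j) (.inr i) := by
  simp only [tree₁, SearchTree.ofRank_anc, rank₁, Prod.Lex.toLex_le_toLex]
  omega

lemma tree₁_anc_inr_inl {i : Fin q} {j : Fin p} (h : j < c i) :
    (tree₁ hp hc).anc (.inr i) (.inl j) := by
  have := hc.le i
  simp only [tree₁, SearchTree.ofRank_anc, rank₁, Prod.Lex.toLex_le_toLex]
  omega

end Trees

section ForcedRotations

variable {c : Fin q → ℕ}

open Classical in
noncomputable def sunkVertices {T T' : SearchTree (SPK p q)}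
    (w : (rotationGraph (SPK p q)).Walk T T') : Finset (Fin q) :=
  {i | ∃ S ∈ w.support, ∀ j, S.anc (.inl j) (.inr i)}

lemma mem_sunkVertices {T T' : SearchTree (SPK p q)} {w : (rotationGraph (SPK p q)).Walk T T'}
    {i : Fin q} : i ∈ sunkVertices w ↔ ∃ S ∈ w.support, ∀ j, S.anc (.inl j) (.inr i) := by
  simp [sunkVertices]

/-- Indices of the rotations that every walk from `tree₀` to `tree₁` must perform, `B` being
its set of sunk vertices: reversing the clique, moving `P_j` above `Q_i` when `c i ≤ j` or
when `Q_i` sinks, moving `P_j` back below a sunk `Q_i` when `j < c i`, and reversing each pair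
of independent vertices that do not both sink. -/
abbrev ForcedIndex (p : ℕ) (B : Finset (Fin q)) (c : Fin q → ℕ) : Type :=
  {z : Fin p × Fin p // z.1 < z.2} ⊕ {z : Fin q × Fin p // z.1 ∈ B ∨ c z.1 ≤ z.2} ⊕
    {z : Fin p × Fin q // z.2 ∈ B ∧ z.1 < c z.2} ⊕
    {z : Fin q × Fin q // z.1 < z.2 ∧ ¬(z.1 ∈ B ∧ z.2 ∈ B)}

def forcedPair {B : Finset (Fin q)} :
    ForcedIndex p B c → (Fin p ⊕ Fin q) × (Fin p ⊕ Fin q) :=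
  Sum.elim (fun z => (.inl z.1.1, .inl z.1.2)) <| Sum.elim (fun z => (.inr z.1.1, .inl z.1.2)) <|
    Sum.elim (fun z => (.inl z.1.1, .inr z.1.2)) fun z => (.inr z.1.1, .inr z.1.2)

lemma forcedPair_injective (B : Finset (Fin q)) :
    Function.Injective (forcedPair (p := p) (c := c) (B := B)) := by
  rintro (⟨⟨_, _⟩, _⟩ | ⟨⟨_, _⟩, _⟩ | ⟨⟨_, _⟩, _⟩ | ⟨⟨_, _⟩, _⟩)
    (⟨⟨_, _⟩, _⟩ | ⟨⟨_, _⟩, _⟩ | ⟨⟨_, _⟩, _⟩ | ⟨⟨_, _⟩, _⟩) h <;> simp_all [forcedPair]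

lemma forcedPair_mem_rotationPairs (hp : 0 < p) (hc : IsDepthProfile p c)
    (w : (rotationGraph (SPK p q)).Walk (tree₀ hp) (tree₁ hp hc))
    (x : ForcedIndex p (sunkVertices w) c) : forcedPair x ∈ rotationPairs w := by
  have hPQ (j : Fin p) (i : Fin q) : (SPK p q).Adj (.inl j) (.inr i) :=
    adj_inl_of_ne Sum.inl_ne_inr
  rcases x with ⟨⟨j, j'⟩, hjj'⟩ | ⟨⟨i, j⟩, hij⟩ | ⟨⟨j, i⟩, hi, hji⟩ | ⟨⟨i, i'⟩, hii', hnot⟩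
  · exact mem_rotationPairs_of_adj w (adj_inl_of_ne (by simpa using hjj'.ne))
      ((tree₀_anc_inl_inl hp j j').mpr hjj'.le) (tree₁_anc_inl_inl hp hc hjj'.le)
  · by_cases hcj : c i ≤ j
    · exact mem_rotationPairs_of_adj w (hPQ j i).symm (tree₀_anc_inr_inl hp i j)
        (tree₁_anc_inl_inr hp hc hcj)
    · obtain ⟨S, hS, hSi⟩ := mem_sunkVertices.mp (hij.resolve_right hcj)
      exact (mem_rotationPairs_of_adj_of_mem_support w hS (hPQ j i).symm
        (tree₀_anc_inr_inl hp i j) (hSi j) (tree₁_anc_inr_inl hp hc (not_le.mp hcj))).1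
  · obtain ⟨S, hS, hSi⟩ := mem_sunkVertices.mp hi
    exact (mem_rotationPairs_of_adj_of_mem_support w hS (hPQ j i).symm
      (tree₀_anc_inr_inl hp i j) (hSi j) (tree₁_anc_inr_inl hp hc hji)).2
  · refine (mem_rotationPairs_or_exists_incomparable w (by simpa using hii'.ne)
      ((tree₀_anc_inr_inr hp i i').mpr hii'.le) (tree₁_anc_inr_inr hp hc hii'.le)).resolve_right ?_
    rintro ⟨S, hS, hnot₁, hnot₂⟩
    exact hnot ⟨mem_sunkVertices.mpr ⟨S, hS, anc_inl_of_incomparable hnot₁ hnot₂⟩,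
      mem_sunkVertices.mpr ⟨S, hS, anc_inl_of_incomparable hnot₂ hnot₁⟩⟩

variable (B : Finset (Fin q))

lemma card_clique_pairs : Fintype.card {z : Fin p × Fin p // z.1 < z.2} = p.choose 2 := by
  rw [Fintype.card_subtype, Fintype.card_product_filter_lt, Fintype.card_fin]

lemma card_up_pairs (hc : ∀ i, c i ≤ p) :
    Fintype.card {z : Fin q × Fin p // z.1 ∈ B ∨ c z.1 ≤ z.2} =
      ∑ i, (p - c i) + ∑ i ∈ B, c i := by
  have hrow (i : Fin q) :
      #{j : Fin p | i ∈ B ∨ c i ≤ j} = (p - c i) + if i ∈ B then c i else 0 := by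
    by_cases hi : i ∈ B
    · have := hc i
      simp only [hi, true_or, filter_true, card_univ, Fintype.card_fin, if_true]
      omega
    · simp [hi, Fin.card_filter_le_val]
  rw [Fintype.card_subtype, card_filter, Fintype.sum_prod_type]
  simp only [← card_filter, hrow, sum_add_distrib, sum_ite_mem, univ_inter]

lemma card_down_pairs (hc : ∀ i, c i ≤ p) :
    Fintype.card {z : Fin p × Fin q // z.2 ∈ B ∧ z.1 < c z.2} = ∑ i ∈ B, c i := by
  have hcol (i : Fin q) : #{j : Fin p | i ∈ B ∧ (j : ℕ) < c i} = if i ∈ B then c i else 0 := by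
    by_cases hi : i ∈ B
    · simp [hi, Fin.card_filter_val_lt, hc i]
    · simp [hi]
  rw [Fintype.card_subtype, card_filter, Fintype.sum_prod_type_right]
  simp only [← card_filter, hcol, sum_ite_mem, univ_inter]

lemma card_independent_pairs :
    Fintype.card {z : Fin q × Fin q // z.1 < z.2 ∧ ¬(z.1 ∈ B ∧ z.2 ∈ B)} =
      q.choose 2 - B.card.choose 2 := by
  have hsplit := card_filter_add_card_filter_not (s := ({z | z.1 < z.2} : Finset (Fin q × Fin q)))
    (fun z => z.1 ∈ B ∧ z.2 ∈ B)
  have hB : ({z | z.1 < z.2} : Finset (Fin q × Fin q)).filter (fun z => z.1 ∈ B ∧ z.2 ∈ B) =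
      {z ∈ B ×ˢ B | z.1 < z.2} := by
    ext z
    simp only [mem_filter, mem_univ, true_and, mem_product]
    tauto
  rw [hB, card_product_filter_lt, Fintype.card_product_filter_lt, Fintype.card_fin,
    filter_filter] at hsplit
  rw [Fintype.card_subtype]
  omega

lemma card_forcedIndex (hc : ∀ i, c i ≤ p) :
    Fintype.card (ForcedIndex p B c) =
      p.choose 2 + ∑ i, (p - c i) + 2 * ∑ i ∈ B, c i + (q.choose 2 - B.card.choose 2) := by
  simp only [Fintype.card_sum, card_clique_pairs, card_up_pairs B hc, card_down_pairs B hc,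
    card_independent_pairs]
  ring

theorem choose_two_add_le_length (hp : 0 < p) (hc : IsDepthProfile p c)
    (w : (rotationGraph (SPK p q)).Walk (tree₀ hp) (tree₁ hp hc)) :
    p.choose 2 + ∑ i, (p - c i) + 2 * ∑ i ∈ sunkVertices w, c i +
      (q.choose 2 - (sunkVertices w).card.choose 2) ≤ w.length := by
  rw [← card_forcedIndex _ hc.le]
  exact card_le_length_of_forall_mem_rotationPairs w (forcedPair_injective _)
    (forcedPair_mem_rotationPairs hp hc w)

lemma le_ediam_of_isDepthProfile (hp : 0 < p) (hc : IsDepthProfile p c) {N : ℕ}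
    (hN : ∀ B : Finset (Fin q), N ≤ p.choose 2 + ∑ i, (p - c i) + 2 * ∑ i ∈ B, c i +
      (q.choose 2 - B.card.choose 2)) :
    (N : ℕ∞) ≤ (rotationGraph (SPK p q)).ediam :=
  (SimpleGraph.le_edist_of_forall_le_length fun w =>
    (hN _).trans (choose_two_add_le_length hp hc w)).trans SimpleGraph.edist_le_ediam

end ForcedRotations

section DepthProfiles

lemma isDepthProfile_const (hp : 0 < p) : IsDepthProfile p fun _ : Fin q => p :=
  ⟨monotone_const, fun _ => le_rfl, fun _ h => absurd h hp.ne'⟩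

def balancedProfile (e r : ℕ) (i : Fin q) : ℕ := if (i : ℕ) < r then e - 1 else e

variable {e r : ℕ}

lemma isDepthProfile_balancedProfile (he : e ≤ p) (hr : r < q) (hqe : q + r ≤ q * e + 1) :
    IsDepthProfile p (balancedProfile (q := q) e r) := by
  have he0 : e = 0 → q = 1 ∧ r = 0 := by rintro rfl; omega
  have he1 : e = 1 → r ≤ 1 := by rintro rfl; omega
  refine ⟨fun i i' hii' => ?_, fun i => ?_, fun i hi => ?_⟩ <;>
    simp only [balancedProfile, Fin.le_def] at * <;> split_ifs at * <;> omega

lemma sum_balancedProfile_add (hr : r ≤ q) (he : 0 < r → 0 < e) :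
    ∑ i, balancedProfile (q := q) e r i + r = q * e := by
  have hterm (i : Fin q) : balancedProfile e r i + (if (i : ℕ) < r then 1 else 0) = e := by
    unfold balancedProfile; split_ifs with hi <;> omega
  have hcount : ∑ i : Fin q, (if (i : ℕ) < r then 1 else 0) = r := by
    rw [← card_filter, Fin.card_filter_val_lt, min_eq_right hr]
  calc ∑ i, balancedProfile e r i + r
      = ∑ i : Fin q, (balancedProfile e r i + if (i : ℕ) < r then 1 else 0) := by
        rw [sum_add_distrib, hcount]
    _ = q * e := by simp only [hterm, sum_const, card_univ, Fintype.card_fin, smul_eq_mul]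

lemma mul_card_le_sum_balancedProfile_add_min (B : Finset (Fin q)) :
    e * B.card ≤ ∑ i ∈ B, balancedProfile e r i + min B.card r := by
  have hterm (i : Fin q) : e ≤ balancedProfile e r i + (if (i : ℕ) < r then 1 else 0) := by
    unfold balancedProfile; split_ifs <;> omega
  have hcount : ∑ i ∈ B, (if (i : ℕ) < r then 1 else 0) ≤ min B.card r := by
    rw [← card_filter]
    refine le_min (card_filter_le _ _) <|
      (card_le_card (filter_subset_filter _ (subset_univ B))).trans ?_
    exact Fin.card_filter_val_lt.trans_le (min_le_right _ _)
  calc e * B.card = ∑ _i ∈ B, e := by rw [sum_const, smul_eq_mul, mul_comm]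
    _ ≤ ∑ i ∈ B, (balancedProfile e r i + if (i : ℕ) < r then 1 else 0) :=
      sum_le_sum fun i _ => hterm i
    _ ≤ _ := by rw [sum_add_distrib]; omega

/-- Witness: the balanced profile with `e = ⌈M / q⌉`. -/
lemma exists_isDepthProfile (hq : 0 < q) {M : ℕ} (hM : q.choose 2 ≤ 2 * M) (hMp : M ≤ p * q) :
    ∃ c : Fin q → ℕ, IsDepthProfile p c ∧ ∑ i, c i = M ∧
      ∀ B : Finset (Fin q), B.card.choose 2 ≤ 2 * ∑ i ∈ B, c i := by
  obtain ⟨e, r, hqe, hr⟩ : ∃ e r, q * e = M + r ∧ r < q := by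
    have := Nat.div_add_mod (M + q - 1) q
    have := Nat.mod_lt (M + q - 1) hq
    exact ⟨(M + q - 1) / q, q * ((M + q - 1) / q) - M, by omega, by omega⟩
  have hq2 := Nat.two_mul_choose_two_add_self q
  have hMq : q ≤ M + 1 := by
    rcases lt_or_ge q 4 with hq4 | hq4
    · interval_cases q <;> omega
    · nlinarith
  have hep : e ≤ p := by
    by_contra! hpe
    nlinarith [Nat.mul_le_mul_left q hpe]
  refine ⟨balancedProfile e r, isDepthProfile_balancedProfile hep hr (by omega), ?_, fun B => ?_⟩
  · have hpos : 0 < r → 0 < e := fun hr0 => Nat.pos_of_ne_zero fun he0 => by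
      rw [he0, mul_zero] at hqe; omega
    have := sum_balancedProfile_add (q := q) hr.le hpos
    omega
  · have hk : B.card ≤ q := B.card_le_univ.trans_eq (Fintype.card_fin q)
    have := two_mul_min_add_choose_two_le hM hqe hr hk
    have := mul_card_le_sum_balancedProfile_add_min (e := e) (r := r) B
    nlinarith

end DepthProfiles

/-- For `c ≡ p`, `tree₁` only reverses the independent set: sinking `k` of its vertices costs
`2pk` rotations but saves at most `k.choose 2` swaps. -/
theorem le_ediam_of_four_mul_lt (hp : 0 < p) (hq : 4 * p < q) :
    ((2 * p * q + p.choose 2 : ℕ) : ℕ∞) ≤ (rotationGraph (SPK p q)).ediam := by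
  refine le_ediam_of_isDepthProfile hp (isDepthProfile_const hp) fun B => ?_
  have := two_mul_mul_le_choose_two_sub hq (by simpa using B.card_le_univ)
  simp only [Nat.sub_self, sum_const_zero, sum_const, smul_eq_mul]
  nlinarith

theorem le_ediam_of_le_four_mul (hp : 0 < p) (hq : 0 < q) (hq4 : q ≤ 4 * p) :
    ((p * q + q.choose 2 / 2 + p.choose 2 : ℕ) : ℕ∞) ≤ (rotationGraph (SPK p q)).ediam := by
  have hMp : q.choose 2 - q.choose 2 / 2 ≤ p * q := by
    have hq2 := Nat.two_mul_choose_two_add_self q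
    have hqq : q * q ≤ 4 * (p * q) := by nlinarith
    omega
  obtain ⟨c, hc, hsum, hB⟩ := exists_isDepthProfile hq (by omega) hMp
  refine le_ediam_of_isDepthProfile hp hc fun B => ?_
  have hcompl : ∑ i, (p - c i) + ∑ i, c i = p * q := by
    rw [← sum_add_distrib, sum_congr rfl fun i _ => Nat.sub_add_cancel (hc.le i), sum_const,
      card_univ, Fintype.card_fin, smul_eq_mul, mul_comm]
  have := hB B
  have := Nat.choose_le_choose 2 (by simpa using B.card_le_univ)
  omega

end SPK

/-- If `q ≥ 4p + 1` then `δ(A(SPK p q)) ≥ 2pq + C(p,2)`; otherwise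
(`q ≤ 4p`), `δ(A(SPK p q)) ≥ pq + ⌊C(q,2)/2⌋ + C(p,2)`. -/
theorem spk_diam_lower (p q : ℕ) (hp : 0 < p) (hq : 0 < q) :
    (4 * p + 1 ≤ q →
      ((2 * p * q + p * (p - 1) / 2 : ℕ) : ℕ∞) ≤ (rotationGraph (SPK p q)).ediam) ∧
    (q ≤ 4 * p →
      ((p * q + q * (q - 1) / 4 + p * (p - 1) / 2 : ℕ) : ℕ∞) ≤
        (rotationGraph (SPK p q)).ediam) := by
  have hq4 : q * (q - 1) / 4 = q.choose 2 / 2 := by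
    rw [Nat.choose_two_right, Nat.div_div_eq_div_mul]
  rw [← Nat.choose_two_right, hq4]
  exact ⟨SPK.le_ediam_of_four_mul_lt hp, SPK.le_ediam_of_le_four_mul hp hq⟩
end

section
/- Let p and q be positive integers. Then δ(A(SPK_{p,q})) ≤ 2pq + p(p−1)/2. -/
open SimpleGraph

/-! Proof idea. A search tree on `SPK p q` is a path from the root (its *spine*) that
contains the whole clique and ends in a clique vertex, with the remaining independent
vertices hanging below that last vertex as leaves. Exchanging two consecutive spine
vertices is a rotation, and so is dropping an independent vertex that sits just above
the last spine vertex. Pushing the independent vertices of the spine down and off one by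
one, at most `p` rotations each, reaches a tree whose spine is the clique alone in at most
`pq` rotations; two such trees differ by a permutation of the clique, which bubble sort
realizes with at most `C(p, 2)` exchanges. -/

variable {V : Type} {G : SimpleGraph V}

theorem SimpleGraph.induce_connected_of_forall_adj {s : Set V} {z : V} (hz : z ∈ s)
    (hadj : ∀ v ∈ s, v ≠ z → G.Adj z v) : (G.induce s).Connected := by
  have hreach : ∀ v : s, (G.induce s).Reachable ⟨z, hz⟩ v := by
    rintro ⟨v, hv⟩
    by_cases hvz : v = z
    · subst hvz; rfl
    · exact Adj.reachable (hadj v hv hvz)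
  have : Nonempty s := ⟨⟨z, hz⟩⟩
  exact ⟨fun u v => (hreach u).symm.trans (hreach v)⟩

theorem SimpleGraph.eq_of_induce_connected {s : Set V} (hs : (G.induce s).Connected)
    (hind : ∀ u ∈ s, ∀ v ∈ s, ¬ G.Adj u v) {u v : V} (hu : u ∈ s) (hv : v ∈ s) : u = v := by
  have hbot : G.induce s = ⊥ := by
    ext a b
    simpa using hind a a.2 b b.2
  have h := hs.preconnected ⟨u, hu⟩ ⟨v, hv⟩
  rw [hbot, reachable_bot] at h
  exact congrArg Subtype.val h

theorem List.Pairwise.rel_iff_idxOf_le {α : Type} [DecidableEq α] {r : α → α → Prop}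
    {L : List α} (hL : L.Pairwise r) (hrefl : ∀ a, r a a)
    (hanti : ∀ a b, r a b → r b a → a = b) {u v : α} (hu : u ∈ L) (hv : v ∈ L) :
    r u v ↔ L.idxOf u ≤ L.idxOf v := by
  have hu' := List.idxOf_lt_length_iff.mpr hu
  have hv' := List.idxOf_lt_length_iff.mpr hv
  have hpair := List.pairwise_iff_getElem.mp hL
  constructor
  · intro huv
    by_contra! hlt
    have hvu := hpair _ _ hv' hu' hlt
    rw [List.getElem_idxOf, List.getElem_idxOf] at hvu
    exact hlt.ne (congrArg L.idxOf (hanti _ _ hvu huv))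
  · intro hle
    rcases hle.eq_or_lt with heq | hlt
    · rw [(List.idxOf_inj hu).mp heq]
      exact hrefl v
    · simpa only [List.getElem_idxOf] using hpair _ _ hu' hv' hlt

namespace SearchTree

noncomputable def depth (T : SearchTree G) (v : V) : ℕ :=
  Set.ncard {u | T.anc u v}

theorem depth_lt_depth [Finite V] (T : SearchTree G) {u v : V} (huv : T.anc u v)
    (hne : u ≠ v) : T.depth u < T.depth v :=
  Set.ncard_lt_ncard ⟨fun _ hw => T.trans _ _ _ hw huv,
    fun h => hne (T.antisymm _ _ huv (h (T.refl v)))⟩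

theorem anc_iff_depth_le [Finite V] (T : SearchTree G) {u v m : V} (hu : T.anc u m)
    (hv : T.anc v m) : T.anc u v ↔ T.depth u ≤ T.depth v := by
  refine ⟨fun huv => ?_, fun hle => ?_⟩
  · rcases eq_or_ne u v with rfl | hne
    · rfl
    · exact (T.depth_lt_depth huv hne).le
  · rcases T.chain u v m hu hv with huv | hvu
    · exact huv
    · rcases eq_or_ne v u with rfl | hne
      · exact T.refl v
      · exact absurd hle (T.depth_lt_depth hvu hne).not_ge

theorem exists_sorted_ancestors [Fintype V] (T : SearchTree G) (m : V) :
    ∃ L : List V, L.Nodup ∧ (∀ v, v ∈ L ↔ T.anc v m) ∧ L.Pairwise T.anc := by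
  classical
  let le : V → V → Bool := fun a b => decide (T.depth a ≤ T.depth b)
  have hperm := List.mergeSort_perm (Finset.univ.filter (T.anc · m)).toList le
  have hmem : ∀ v, v ∈ (Finset.univ.filter (T.anc · m)).toList.mergeSort le ↔ T.anc v m := by
    simp [hperm.mem_iff]
  refine ⟨_, hperm.nodup_iff.mpr (Finset.nodup_toList _), hmem, ?_⟩
  refine (List.pairwise_mergeSort (fun a b c hab hbc => ?_) (fun a b => ?_) _).imp_of_mem
    fun ha hb hab => (T.anc_iff_depth_le ((hmem _).mp ha) ((hmem _).mp hb)).mpr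
      (of_decide_eq_true hab)
  · simp only [decide_eq_true_eq] at hab hbc ⊢
    exact hab.trans hbc
  · simpa [le] using le_total _ _

end SearchTree

section Spine

variable [DecidableEq V]

/-- The ancestor relation of the search tree whose root path is `L`, read from the root,
all other vertices being leaves below the last vertex of `L`. -/
def spineAnc (L : List V) (u v : V) : Prop :=
  u = v ∨ (u ∈ L ∧ (v ∉ L ∨ L.idxOf u ≤ L.idxOf v))

theorem spineAnc_iff_of_eq_append {L A B : List V} {u v : V} (hL : L.Nodup)
    (h : L = A ++ v :: B) : spineAnc L v u ↔ u ∉ A := by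
  subst h
  have hvA : v ∉ A := fun hv => List.disjoint_of_nodup_append hL hv List.mem_cons_self
  have hidx : (A ++ v :: B).idxOf v = A.length := by
    rw [List.idxOf_append_of_notMem hvA, List.idxOf_cons_self, Nat.add_zero]
  unfold spineAnc
  by_cases huA : u ∈ A
  · have hlt : (A ++ v :: B).idxOf u < A.length := by
      rw [List.idxOf_append_of_mem huA]
      exact List.idxOf_lt_length_iff.mpr huA
    have huv : u ≠ v := fun h => hvA (h ▸ huA)
    simp only [huA, not_true_eq_false, iff_false, hidx]
    rintro (h | ⟨-, h | h⟩)
    · exact huv h.symm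
    · exact h (List.mem_append_left _ huA)
    · omega
  · simp only [huA, not_false_eq_true, iff_true, hidx]
    by_cases huL : u ∈ A ++ v :: B
    · rw [List.idxOf_append_of_notMem huA]
      exact Or.inr ⟨by simp, Or.inr (Nat.le_add_right _ _)⟩
    · exact Or.inr ⟨by simp, Or.inl huL⟩

theorem spineAnc_iff_of_notMem {L : List V} {u v : V} (hv : v ∉ L) :
    spineAnc L v u ↔ u = v := by
  simp only [spineAnc, hv, false_and, or_false, eq_comm]

theorem spineAnc_antisymm {L : List V} {u v : V} (huv : spineAnc L u v)
    (hvu : spineAnc L v u) : u = v := by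
  rcases huv with rfl | ⟨hu, huv⟩
  · rfl
  rcases hvu with rfl | ⟨hv, hvu⟩
  · rfl
  rcases huv with huv | huv
  · exact absurd hv huv
  rcases hvu with hvu | hvu
  · exact absurd hu hvu
  exact (List.idxOf_inj hu).mp (le_antisymm huv hvu)

theorem spineAnc_trans {L : List V} {u v w : V} (huv : spineAnc L u v) (hvw : spineAnc L v w) :
    spineAnc L u w := by
  rcases huv with rfl | ⟨hu, huv⟩
  · exact hvw
  rcases hvw with rfl | ⟨hv, hvw⟩
  · exact Or.inr ⟨hu, huv⟩
  rcases huv with huv | huv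
  · exact absurd hv huv
  rcases hvw with hvw | hvw
  · exact Or.inr ⟨hu, Or.inl hvw⟩
  · exact Or.inr ⟨hu, Or.inr (huv.trans hvw)⟩

theorem spineAnc_total_of_mem {L : List V} {u v : V} (hu : u ∈ L) :
    spineAnc L u v ∨ spineAnc L v u := by
  by_cases hv : v ∈ L
  · rcases le_total (L.idxOf u) (L.idxOf v) with h | h
    · exact Or.inl (Or.inr ⟨hu, Or.inr h⟩)
    · exact Or.inr (Or.inr ⟨hv, Or.inr h⟩)
  · exact Or.inl (Or.inr ⟨hu, Or.inl hv⟩)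

theorem spineAnc_of_getLast? {L : List V} {v z : V} (hL : L.Nodup) (hz : L.getLast? = some z)
    (hv : v ∈ L) : spineAnc L v z := by
  obtain ⟨A, rfl⟩ := List.getLast?_eq_some_iff.mp hz
  have hzA : z ∉ A := fun h => List.disjoint_of_nodup_append hL h (List.mem_singleton_self z)
  refine Or.inr ⟨hv, Or.inr ?_⟩
  rw [List.idxOf_append_of_notMem hzA, List.idxOf_cons_self, Nat.add_zero]
  have := List.idxOf_lt_length_iff.mpr hv
  simp only [List.length_append, List.length_singleton] at this
  omega

namespace SearchTree

def HasSpine (T : SearchTree G) (L : List V) : Prop :=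
  T.anc = spineAnc L

variable {T T' : SearchTree G} {L A B C : List V}

theorem HasSpine.eq (hT : T.HasSpine L) (hT' : T'.HasSpine L) : T = T' := by
  cases T
  cases T'
  unfold HasSpine at hT hT'
  subst hT hT'
  rfl

theorem HasSpine.descSet_eq_of_eq_append {v : V} (hT : T.HasSpine L) (hL : L.Nodup)
    (h : L = A ++ v :: B) : T.descSet v = {u | u ∉ A} := by
  ext u
  exact (congrFun (congrFun hT v) u).to_iff.trans (spineAnc_iff_of_eq_append hL h)

theorem HasSpine.descSet_eq_of_notMem {v : V} (hT : T.HasSpine L) (hv : v ∉ L) :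
    T.descSet v = {v} := by
  ext u
  exact (congrFun (congrFun hT v) u).to_iff.trans (spineAnc_iff_of_notMem hv)

theorem exists_hasSpine {z : V} (hL : L.Nodup) (hz : L.getLast? = some z)
    (hadj : ∀ v, v ≠ z → G.Adj z v) (hind : ∀ u v, u ∉ L → v ∉ L → ¬ G.Adj u v) :
    ∃ T : SearchTree G, T.HasSpine L := by
  refine ⟨⟨spineAnc L, fun _ => Or.inl rfl, fun _ _ => spineAnc_antisymm,
    fun _ _ _ => spineAnc_trans, ?_, ?_, ?_, ?_⟩, rfl⟩
  · rintro u v w (rfl | ⟨hu, -⟩) hvw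
    · exact Or.inr hvw
    · exact spineAnc_total_of_mem hu
  · cases L with
    | nil => simp at hz
    | cons a L =>
      exact ⟨a, fun v => (spineAnc_iff_of_eq_append (A := []) hL rfl).mpr List.not_mem_nil⟩
  · intro u v huv
    by_cases hu : u ∈ L
    · exact spineAnc_total_of_mem hu
    by_cases hv : v ∈ L
    · exact (spineAnc_total_of_mem hv).symm
    exact absurd huv (hind u v hu hv)
  · intro v
    by_cases hv : v ∈ L
    · exact induce_connected_of_forall_adj (spineAnc_of_getLast? hL hz hv)
        fun u _ huz => hadj u huz
    · rw [show {u | spineAnc L v u} = {v} from Set.ext fun u => spineAnc_iff_of_notMem hv]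
      exact induce_connected_of_forall_adj rfl fun u hu huv => absurd hu huv

theorem HasSpine.isRotation_swap {a b : V} (hT : T.HasSpine (A ++ a :: b :: C))
    (hT' : T'.HasSpine (A ++ b :: a :: C)) (hL : (A ++ a :: b :: C).Nodup) :
    IsRotation T T' a b := by
  have hL' : (A ++ b :: a :: C).Nodup :=
    (List.Perm.append_left A (List.Perm.swap b a C)).nodup_iff.mp hL
  have hab : a ≠ b := by
    rintro rfl
    exact (List.nodup_cons.mp hL.of_append_right).1 List.mem_cons_self
  refine ⟨hab, ?_, ?_, fun v hva hvb => ?_⟩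
  · rw [hT]
    refine (spineAnc_iff_of_eq_append hL rfl).mpr fun hbA => ?_
    exact List.disjoint_of_nodup_append hL hbA (by simp)
  · rw [hT'.descSet_eq_of_eq_append hL' rfl, hT.descSet_eq_of_eq_append hL rfl]
  by_cases hvA : v ∈ A
  · obtain ⟨A₁, A₂, rfl⟩ := List.append_of_mem hvA
    rw [hT'.descSet_eq_of_eq_append (A := A₁) (B := A₂ ++ b :: a :: C) hL' (by simp),
      hT.descSet_eq_of_eq_append (A := A₁) (B := A₂ ++ a :: b :: C) hL (by simp)]
  by_cases hvC : v ∈ C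
  · obtain ⟨C₁, C₂, rfl⟩ := List.append_of_mem hvC
    rw [hT'.descSet_eq_of_eq_append (A := A ++ b :: a :: C₁) (B := C₂) hL' (by simp),
      hT.descSet_eq_of_eq_append (A := A ++ a :: b :: C₁) (B := C₂) hL (by simp)]
    ext u
    show u ∉ _ ↔ u ∉ _
    simp only [List.mem_append, List.mem_cons]
    tauto
  rw [hT'.descSet_eq_of_notMem (by simp [*]), hT.descSet_eq_of_notMem (by simp [*])]

theorem HasSpine.isRotation_drop {x y : V} (hT : T.HasSpine (A ++ [x, y]))
    (hT' : T'.HasSpine (A ++ [y])) (hL : (A ++ [x, y]).Nodup) : IsRotation T T' x y := by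
  have hL' : (A ++ [y]).Nodup :=
    (List.Sublist.append_left (List.sublist_cons_self x [y]) A).nodup hL
  have hxy : x ≠ y := by
    rintro rfl
    exact (List.nodup_cons.mp hL.of_append_right).1 List.mem_cons_self
  refine ⟨hxy, ?_, ?_, fun v hvx hvy => ?_⟩
  · rw [hT]
    refine (spineAnc_iff_of_eq_append (B := [y]) hL rfl).mpr fun hyA => ?_
    exact List.disjoint_of_nodup_append hL hyA (by simp)
  · rw [hT'.descSet_eq_of_eq_append (B := []) hL' rfl,
      hT.descSet_eq_of_eq_append (B := [y]) hL rfl]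
  by_cases hvA : v ∈ A
  · obtain ⟨A₁, A₂, rfl⟩ := List.append_of_mem hvA
    rw [hT'.descSet_eq_of_eq_append (A := A₁) (B := A₂ ++ [y]) hL' (by simp),
      hT.descSet_eq_of_eq_append (A := A₁) (B := A₂ ++ [x, y]) hL (by simp)]
  rw [hT'.descSet_eq_of_notMem (by simp [*]), hT.descSet_eq_of_notMem (by simp [*])]

theorem exists_hasSpine_of_forall_leaf [Fintype V] (T : SearchTree G) (m : V)
    (hcomp : ∀ v, T.anc v m ∨ T.anc m v) (hleaf : ∀ v, ¬ T.anc v m → ∀ u, T.anc v u → u = v) :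
    ∃ L : List V, L.Nodup ∧ (∀ v, v ∈ L ↔ T.anc v m) ∧ L.getLast? = some m ∧ T.HasSpine L := by
  obtain ⟨L, hL, hmem, hsorted⟩ := T.exists_sorted_ancestors m
  have hm : m ∈ L := (hmem m).mpr (T.refl m)
  obtain ⟨A, z, hAz⟩ : ∃ A z, L = A ++ [z] := by
    simpa using (List.eq_nil_or_concat L).resolve_left (List.ne_nil_of_mem hm)
  have hzm : z = m := by
    refine T.antisymm _ _ ((hmem z).mp (by simp [hAz])) ?_
    rcases List.mem_append.mp (hAz ▸ hm) with hmA | hmz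
    · exact (List.pairwise_append.mp (hAz ▸ hsorted)).2.2 m hmA z (by simp)
    · rw [List.mem_singleton.mp hmz]
      exact T.refl _
  refine ⟨L, hL, hmem, by simp [hAz, hzm], ?_⟩
  funext u v
  apply propext
  by_cases hu : T.anc u m
  · have huL := (hmem u).mpr hu
    by_cases hv : T.anc v m
    · have hvL := (hmem v).mpr hv
      rw [hsorted.rel_iff_idxOf_le T.refl T.antisymm huL hvL]
      simp only [spineAnc, huL, hvL, not_true_eq_false, false_or, true_and]
      exact ⟨Or.inr, by rintro (rfl | h); exacts [le_rfl, h]⟩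
    · exact iff_of_true (T.trans _ _ _ hu ((hcomp v).resolve_left hv))
        (Or.inr ⟨huL, Or.inl fun hvL => hv ((hmem v).mp hvL)⟩)
  · rw [spineAnc_iff_of_notMem fun huL => hu ((hmem u).mp huL)]
    exact ⟨hleaf u hu v, fun h => h ▸ T.refl u⟩

end SearchTree

end Spine

namespace SPK

variable {p q : ℕ}

theorem inl_adj {x : Fin p} {v : Fin p ⊕ Fin q} (hv : v ≠ .inl x) : (SPK p q).Adj (.inl x) v :=
  ⟨hv.symm, Or.inl rfl⟩

theorem not_inr_adj_inr (x y : Fin q) : ¬ (SPK p q).Adj (.inr x) (.inr y) := fun h => by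
  simpa using h.2

end SPK

theorem List.map_inl_filterMap_getLeft? {α β : Type} (L : List (α ⊕ β)) :
    (L.filterMap Sum.getLeft?).map Sum.inl = L.filter (·.isLeft) := by
  induction L with
  | nil => rfl
  | cons v L ih => cases v <;> simp [List.filterMap_cons, List.filter_cons, ih]

section SPKSpine

variable {p q : ℕ}

structure IsSPKSpine (L : List (Fin p ⊕ Fin q)) : Prop where
  nodup : L.Nodup
  inl_mem : ∀ x, .inl x ∈ L
  getLast?_eq : ∃ x, L.getLast? = some (.inl x)

theorem exists_getLast?_eq_inl (R : List (Fin p ⊕ Fin q)) {L : List (Fin p ⊕ Fin q)}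
    (hL : L ≠ []) (h : ∀ v ∈ L, v.isLeft) : ∃ x, (R ++ L).getLast? = some (.inl x) := by
  obtain ⟨x, hx⟩ := Sum.isLeft_iff.mp (h _ (List.getLast_mem hL))
  exact ⟨x, by rw [List.getLast?_append_of_ne_nil R hL, List.getLast?_eq_some_getLast hL, hx]⟩

theorem length_filter_isLeft_le {L : List (Fin p ⊕ Fin q)} (hL : L.Nodup) :
    (L.filter (·.isLeft)).length ≤ p := by
  rw [← List.map_inl_filterMap_getLeft?, List.length_map]
  simpa using (hL.filterMap (f := Sum.getLeft?) fun a a' x ha ha' => by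
    simp only [Option.mem_def, Sum.getLeft?_eq_some_iff] at ha ha'
    rw [ha, ha']).length_le_card

theorem length_filterMap_getRight?_le {L : List (Fin p ⊕ Fin q)} (hL : L.Nodup) :
    (L.filterMap Sum.getRight?).length ≤ q := by
  simpa using (hL.filterMap (f := Sum.getRight?) fun a a' x ha ha' => by
    simp only [Option.mem_def, Sum.getRight?_eq_some_iff] at ha ha'
    rw [ha, ha']).length_le_card

namespace IsSPKSpine

variable {L L' : List (Fin p ⊕ Fin q)}

theorem exists_hasSpine (hL : IsSPKSpine L) : ∃ T : SearchTree (SPK p q), T.HasSpine L := by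
  obtain ⟨x, hx⟩ := hL.getLast?_eq
  refine SearchTree.exists_hasSpine hL.nodup hx (fun v hv => SPK.inl_adj hv) ?_
  rintro (u | u) (v | v) hu hv
  · exact absurd (hL.inl_mem u) hu
  · exact absurd (hL.inl_mem u) hu
  · exact absurd (hL.inl_mem v) hv
  · exact SPK.not_inr_adj_inr u v

theorem perm (hL : IsSPKSpine L) (h : L.Perm L') (hlast : ∃ x, L'.getLast? = some (.inl x)) :
    IsSPKSpine L' :=
  ⟨h.nodup_iff.mp hL.nodup, fun x => h.mem_iff.mp (hL.inl_mem x), hlast⟩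

theorem swap {A D : List (Fin p ⊕ Fin q)} {x b : Fin p ⊕ Fin q}
    (hL : IsSPKSpine (A ++ x :: b :: D)) (hb : b.isLeft) (hx : x.isLeft ∨ D ≠ []) :
    IsSPKSpine (A ++ b :: x :: D) := by
  refine hL.perm (List.Perm.append_left A (List.Perm.swap b x D)) ?_
  rcases eq_or_ne D [] with rfl | hD
  · refine exists_getLast?_eq_inl A (by simp) ?_
    simp [hb, hx.resolve_right (not_not.mpr rfl)]
  · obtain ⟨y, hy⟩ := hL.getLast?_eq
    have e : ∀ u w : Fin p ⊕ Fin q, A ++ u :: w :: D = (A ++ [u, w]) ++ D := by simp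
    rw [e, List.getLast?_append_of_ne_nil _ hD] at hy ⊢
    exact ⟨y, hy⟩

theorem getLast?_eq_of_inr {A B : List (Fin p ⊕ Fin q)} {x : Fin q}
    (hL : IsSPKSpine (A ++ .inr x :: B)) : ∃ y, B.getLast? = some (.inl y) := by
  obtain ⟨y, hy⟩ := hL.getLast?_eq
  rcases eq_or_ne B [] with rfl | hB
  · simp at hy
  · exact ⟨y, by rwa [← List.singleton_append, ← List.append_assoc,
      List.getLast?_append_of_ne_nil _ hB] at hy⟩

theorem mem_filter_isLeft (hL : IsSPKSpine L) {v : Fin p ⊕ Fin q} :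
    v ∈ L.filter (·.isLeft) ↔ v.isLeft := by
  cases v <;> simp [hL.inl_mem]

theorem filter_isLeft (hL : IsSPKSpine L) : IsSPKSpine (L.filter (·.isLeft)) := by
  obtain ⟨x, hx⟩ := hL.getLast?_eq
  refine ⟨hL.nodup.filter _, fun y => hL.mem_filter_isLeft.mpr rfl, ?_⟩
  have hxL : Sum.inl x ∈ L.filter (·.isLeft) := hL.mem_filter_isLeft.mpr rfl
  simpa using exists_getLast?_eq_inl [] (List.ne_nil_of_mem hxL)
    fun v hv => (List.mem_filter.mp hv).2

end IsSPKSpine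

theorem SearchTree.exists_isSPKSpine_hasSpine (hp : 0 < p) (T : SearchTree (SPK p q)) :
    ∃ L, IsSPKSpine L ∧ T.HasSpine L := by
  have : Nonempty (Fin p) := ⟨⟨0, hp⟩⟩
  obtain ⟨m, hm⟩ := Finite.exists_max fun x : Fin p => T.depth (.inl x)
  have hinl : ∀ x, T.anc (.inl x) (.inl m) := by
    intro x
    rcases eq_or_ne x m with rfl | hne
    · exact T.refl _
    rcases T.edge_comparable _ _ (SPK.inl_adj (q := q) (Sum.inl_injective.ne hne)) with h | h
    · exact absurd (hm x) (T.depth_lt_depth h (Sum.inl_injective.ne hne.symm)).not_ge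
    · exact h
  have hcomp : ∀ v, T.anc v (.inl m) ∨ T.anc (.inl m) v := by
    rintro (x | y)
    · exact Or.inl (hinl x)
    · exact (T.edge_comparable _ _ (SPK.inl_adj Sum.inr_ne_inl)).symm
  have hleaf : ∀ v, ¬ T.anc v (.inl m) → ∀ u, T.anc v u → u = v := by
    intro v hv u hvu
    refine eq_of_induce_connected (T.desc_connected v) ?_ hvu (T.refl v)
    rintro (a | a) ha (b | b) hb
    · exact absurd (T.trans _ _ _ ha (hinl a)) hv
    · exact absurd (T.trans _ _ _ ha (hinl a)) hv
    · exact absurd (T.trans _ _ _ hb (hinl b)) hv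
    · exact SPK.not_inr_adj_inr a b
  obtain ⟨L, hL, hmem, hlast, hT⟩ := T.exists_hasSpine_of_forall_leaf _ hcomp hleaf
  exact ⟨L, ⟨hL, fun x => (hmem _).mpr (hinl x), m, hlast⟩, hT⟩

variable {T T' : SearchTree (SPK p q)}

theorem edist_le_length_of_move {A B C : List (Fin p ⊕ Fin q)} {x : Fin p ⊕ Fin q}
    (hB : ∀ v ∈ B, v.isLeft) (hx : x.isLeft ∨ C ≠ []) (hL : IsSPKSpine (A ++ x :: (B ++ C)))
    (hT : T.HasSpine (A ++ x :: (B ++ C))) (hT' : T'.HasSpine (A ++ B ++ x :: C)) :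
    (rotationGraph (SPK p q)).edist T T' ≤ B.length := by
  induction B generalizing A T with
  | nil =>
    rw [hT.eq (by simpa using hT')]
    simp
  | cons b B ih =>
    have hL' : IsSPKSpine (A ++ b :: x :: (B ++ C)) :=
      hL.swap (hB b List.mem_cons_self) (hx.imp_right fun hC => by simp [hC])
    obtain ⟨T'', hT''⟩ := hL'.exists_hasSpine
    have hadj : (rotationGraph (SPK p q)).Adj T T'' :=
      ⟨x, b, hT.isRotation_swap hT'' hL.nodup⟩
    have hrest := ih (A := A ++ [b]) (fun v hv => hB v (List.mem_cons_of_mem b hv))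
      (by simpa using hL') (by simpa using hT'') (by simpa using hT')
    calc _ ≤ _ + _ := SimpleGraph.edist_triangle (v := T'')
      _ ≤ 1 + B.length := add_le_add (edist_eq_one_iff_adj.mpr hadj).le hrest
      _ = (b :: B).length := by simp [add_comm]

theorem edist_le_length_of_remove {A B : List (Fin p ⊕ Fin q)} {x : Fin q}
    (hB : ∀ v ∈ B, v.isLeft) (hL : IsSPKSpine (A ++ .inr x :: B))
    (hT : T.HasSpine (A ++ .inr x :: B)) (hT' : T'.HasSpine (A ++ B)) :
    (rotationGraph (SPK p q)).edist T T' ≤ B.length := by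
  obtain ⟨y, hy⟩ := hL.getLast?_eq_of_inr
  obtain ⟨B, rfl⟩ := List.getLast?_eq_some_iff.mp hy
  have hL' : IsSPKSpine (A ++ B ++ [.inr x, .inl y]) :=
    hL.perm (by rw [List.append_assoc]; exact List.Perm.append_left A List.perm_middle.symm)
      ⟨y, by simp⟩
  obtain ⟨T'', hT''⟩ := hL'.exists_hasSpine
  have hmove := edist_le_length_of_move (B := B) (C := [.inl y])
    (fun v hv => hB v (List.mem_append_left _ hv)) (Or.inr (List.cons_ne_nil _ _)) hL hT
    (by simpa using hT'')
  have hadj : (rotationGraph (SPK p q)).Adj T'' T' :=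
    ⟨.inr x, .inl y, hT''.isRotation_drop (by simpa using hT') hL'.nodup⟩
  calc _ ≤ _ + _ := SimpleGraph.edist_triangle (v := T'')
    _ ≤ B.length + 1 := add_le_add hmove (edist_eq_one_iff_adj.mpr hadj).le
    _ = _ := by simp

theorem edist_le_of_hasSpine_filter_isLeft (B : List (Fin p ⊕ Fin q)) {A : List (Fin p ⊕ Fin q)}
    (hL : IsSPKSpine (A ++ B)) (hT : T.HasSpine (A ++ B))
    (hT' : T'.HasSpine (A ++ B.filter (·.isLeft))) :
    (rotationGraph (SPK p q)).edist T T' ≤ p * (B.filterMap Sum.getRight?).length := by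
  induction B generalizing A T T' with
  | nil =>
    rw [hT.eq (by simpa using hT')]
    simp
  | cons v B ih =>
    cases v with
    | inl y =>
      simpa [List.filterMap_cons] using ih (A := A ++ [.inl y]) (by simpa using hL)
        (by simpa using hT) (by simpa [List.filter_cons] using hT')
    | inr x =>
      obtain ⟨y, hy⟩ := hL.getLast?_eq_of_inr
      have hyB : Sum.inl y ∈ B.filter (·.isLeft) :=
        List.mem_filter.mpr ⟨List.mem_of_getLast? hy, rfl⟩
      have hL'' : IsSPKSpine (A ++ .inr x :: B.filter (·.isLeft)) := by
        refine ⟨((List.filter_sublist.cons_cons _).append_left A).nodup hL.nodup,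
          fun z => by simpa [List.mem_filter] using hL.inl_mem z, ?_⟩
        have := exists_getLast?_eq_inl (A ++ [.inr x]) (List.ne_nil_of_mem hyB)
          (fun v hv => (List.mem_filter.mp hv).2)
        rwa [List.append_assoc, List.singleton_append] at this
      obtain ⟨T'', hT''⟩ := hL''.exists_hasSpine
      have hfirst := ih (A := A ++ [.inr x]) (by simpa using hL) (by simpa using hT)
        (by simpa using hT'')
      have hremove := edist_le_length_of_remove (fun v hv => (List.mem_filter.mp hv).2) hL''
        hT'' (by simpa using hT')
      have hlen : (B.filter (·.isLeft)).length ≤ p :=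
        length_filter_isLeft_le (List.nodup_cons.mp hL.nodup.of_append_right).2
      calc _ ≤ _ + _ := SimpleGraph.edist_triangle (v := T'')
        _ ≤ p * (B.filterMap Sum.getRight?).length + p :=
            add_le_add hfirst (hremove.trans (by exact_mod_cast hlen))
        _ = _ := by simp [mul_add]

theorem edist_le_choose_of_perm (N : List (Fin p ⊕ Fin q)) {M R : List (Fin p ⊕ Fin q)}
    (hMN : M.Perm N) (hN : ∀ v ∈ N, v.isLeft) (hL : IsSPKSpine (R ++ M))
    (hT : T.HasSpine (R ++ M)) (hT' : T'.HasSpine (R ++ N)) :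
    (rotationGraph (SPK p q)).edist T T' ≤ N.length.choose 2 := by
  induction N generalizing M R T with
  | nil =>
    rw [hMN.eq_nil] at hT
    rw [hT.eq hT']
    simp
  | cons n N ih =>
    obtain ⟨A, B, rfl⟩ := List.append_of_mem (hMN.mem_iff.mpr List.mem_cons_self)
    have hAB : (A ++ B).Perm N := (List.perm_middle.symm.trans hMN).cons_inv
    have hleft : ∀ v ∈ A ++ n :: B, v.isLeft := fun v hv => hN v (hMN.mem_iff.mp hv)
    have hL'' : IsSPKSpine (R ++ n :: (A ++ B)) :=
      hL.perm (List.Perm.append_left R List.perm_middle) (exists_getLast?_eq_inl R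
        (List.cons_ne_nil _ _) fun v hv => hleft v (List.perm_middle.mem_iff.mpr hv))
    obtain ⟨T'', hT''⟩ := hL''.exists_hasSpine
    have hbubble := edist_le_length_of_move (B := A) (fun v hv => hleft v (by simp [hv]))
      (Or.inl (hN n List.mem_cons_self)) hL'' hT'' (by simpa using hT)
    have hrest := ih (R := R ++ [n]) hAB (fun v hv => hN v (List.mem_cons_of_mem n hv))
      (by simpa using hL'') (by simpa using hT'') (by simpa using hT')
    have hA : A.length ≤ N.length := by
      have := hAB.length_eq
      simp only [List.length_append] at this
      omega
    calc _ ≤ _ + _ := SimpleGraph.edist_triangle (v := T'')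
      _ ≤ N.length + N.length.choose 2 := by
          rw [edist_comm]
          exact add_le_add (hbubble.trans (by exact_mod_cast hA)) hrest
      _ = _ := by simp [Nat.choose_succ_succ']

theorem edist_le_mul_of_hasSpine_filter_isLeft {L : List (Fin p ⊕ Fin q)} (hL : IsSPKSpine L)
    (hT : T.HasSpine L) (hT' : T'.HasSpine (L.filter (·.isLeft))) :
    (rotationGraph (SPK p q)).edist T T' ≤ p * q :=
  (edist_le_of_hasSpine_filter_isLeft L (A := []) hL hT hT').trans <| by
    exact_mod_cast Nat.mul_le_mul_left p (length_filterMap_getRight?_le hL.nodup)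

theorem edist_le_choose_of_hasSpine_filter_isLeft {L L' : List (Fin p ⊕ Fin q)}
    (hL : IsSPKSpine L) (hL' : IsSPKSpine L') (hT : T.HasSpine (L.filter (·.isLeft)))
    (hT' : T'.HasSpine (L'.filter (·.isLeft))) :
    (rotationGraph (SPK p q)).edist T T' ≤ p.choose 2 := by
  have hperm : (L.filter (·.isLeft)).Perm (L'.filter (·.isLeft)) :=
    (List.perm_ext_iff_of_nodup (hL.nodup.filter _) (hL'.nodup.filter _)).mpr fun v => by
      rw [hL.mem_filter_isLeft, hL'.mem_filter_isLeft]
  refine (edist_le_choose_of_perm _ (R := []) hperm (fun v hv => (List.mem_filter.mp hv).2)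
    hL.filter_isLeft hT hT').trans ?_
  exact_mod_cast Nat.choose_le_choose 2 (length_filter_isLeft_le hL'.nodup)

end SPKSpine

theorem spk_diam_upper_general (p q : ℕ) (hp : 0 < p) :
    (rotationGraph (SPK p q)).ediam ≤ ((2 * p * q + p * (p - 1) / 2 : ℕ) : ℕ∞) := by
  refine ediam_le_of_edist_le fun T T' => ?_
  obtain ⟨L, hL, hT⟩ := T.exists_isSPKSpine_hasSpine hp
  obtain ⟨L', hL', hT'⟩ := T'.exists_isSPKSpine_hasSpine hp
  obtain ⟨S, hS⟩ := hL.filter_isLeft.exists_hasSpine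
  obtain ⟨S', hS'⟩ := hL'.filter_isLeft.exists_hasSpine
  have h₁ := edist_le_mul_of_hasSpine_filter_isLeft hL hT hS
  have h₂ := edist_le_choose_of_hasSpine_filter_isLeft hL hL' hS hS'
  have h₃ := edist_le_mul_of_hasSpine_filter_isLeft hL' hT' hS'
  rw [edist_comm] at h₃
  calc _ ≤ _ + (_ + _) := (SimpleGraph.edist_triangle (v := S)).trans
        (add_le_add le_rfl (SimpleGraph.edist_triangle (v := S')))
    _ ≤ ((p * q + (p.choose 2 + p * q) : ℕ) : ℕ∞) := by
        push_cast
        gcongr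
    _ = _ := by
        rw [Nat.choose_two_right]
        congr 1
        ring

/-- For all positive integers `p` and `q`,
`δ(A(SPK p q)) ≤ 2pq + C(p,2)`. -/
theorem spk_diam_upper (p q : ℕ) (hp : 0 < p) (hq : 0 < q) :
    (rotationGraph (SPK p q)).ediam ≤ ((2 * p * q + p * (p - 1) / 2 : ℕ) : ℕ∞) :=
  spk_diam_upper_general p q hp
end
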